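/- arXiv:math/0204130 — 7 statements merged into one kernel-verified Lean document; each statement's English description precedes it below -/
import Mathlib

section
/- If (X, ρ) is a connected metric space such that for every pair of distinct points y, z ∈ X the midset M(y,z) = {x ∈ X : ρ(x,y) = ρ(x,z)} has exactly one point (the unique midset property), then X is homeomorphic to an interval of the real line, i.e., to an order-convex subset of ℝ with the subspace topology. -/
open Set

namespace BerardUMP

variable {X : Type*} [MetricSpace X]

lemma rel_core {C A B u v : Set X} (hC : IsPreconnected C) {c : X} (hc : c ∈ C)
    (hA : IsOpen A) (hB : IsOpen B) (hAB : Disjoint A B) (hcov : C \ {c} ⊆ A ∪ B)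
    (hu : IsOpen u) (hv : IsOpen v)
    (hDuv : ((C ∩ A) ∪ {c}) ⊆ u ∪ v) (hcu : c ∈ u)
    (hne : (((C ∩ A) ∪ {c}) ∩ v).Nonempty) :
    (((C ∩ A) ∪ {c}) ∩ (u ∩ v)).Nonempty := by
  by_cases hcv : c ∈ v
  · exact ⟨c, Or.inr rfl, hcu, hcv⟩
  · obtain ⟨q, hqD, hqv⟩ := hne
    have hqc : q ≠ c := fun h => hcv (h ▸ hqv)
    have hqCA : q ∈ C ∩ A := by
      rcases hqD with h | h
      · exact h
      · exact absurd h hqc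
    have hcov2 : C ⊆ (u ∪ B) ∪ (v ∩ A) := by
      intro z hz
      by_cases hzc : z = c
      · exact Or.inl (Or.inl (hzc ▸ hcu))
      · rcases hcov ⟨hz, hzc⟩ with hzA | hzB
        · rcases hDuv (Or.inl ⟨hz, hzA⟩) with h | h
          · exact Or.inl (Or.inl h)
          · exact Or.inr ⟨h, hzA⟩
        · exact Or.inl (Or.inr hzB)
    obtain ⟨z, hzC, hz1, hzv, hzA⟩ :=
      hC (u ∪ B) (v ∩ A) (hu.union hB) (hv.inter hA) hcov2 ⟨c, hc, Or.inl hcu⟩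
        ⟨q, hqCA.1, hqv, hqCA.2⟩
    have hzu : z ∈ u := by
      rcases hz1 with h | h
      · exact h
      · exact absurd h (disjoint_left.mp hAB hzA)
    exact ⟨z, Or.inl ⟨hzC, hzA⟩, hzu, hzv⟩

/-- Relative version: cutting a connected set at a point, one open side plus the cut
point is preconnected. -/
lemma rel_side {C : Set X} (hC : IsPreconnected C) {c : X} (hc : c ∈ C)
    {A B : Set X} (hA : IsOpen A) (hB : IsOpen B) (hAB : Disjoint A B)
    (hcov : C \ {c} ⊆ A ∪ B) : IsPreconnected ((C ∩ A) ∪ {c}) := by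
  intro u v hu hv hcov' h1 h2
  have hcD : c ∈ (C ∩ A) ∪ {c} := Or.inr rfl
  rcases hcov' hcD with hcu | hcv
  · exact rel_core hC hc hA hB hAB hcov hu hv hcov' hcu h2
  · have := rel_core hC hc hA hB hAB hcov hv hu
      (by rw [union_comm v u]; exact hcov') hcv h1
    obtain ⟨z, hz, hz1, hz2⟩ := this
    exact ⟨z, hz, hz2, hz1⟩

/-- One open side of a cut point, plus the point, is preconnected. -/
lemma cut_side [ConnectedSpace X] {c : X} {A B : Set X}
    (hA : IsOpen A) (hB : IsOpen B) (hAB : Disjoint A B)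
    (hcov : {c}ᶜ ⊆ A ∪ B) : IsPreconnected (A ∪ {c}) := by
  have := rel_side isPreconnected_univ (mem_univ c) hA hB hAB
    (fun z hz => hcov hz.2)
  simpa [univ_inter] using this


lemma distc_cont (w : X) : Continuous (fun z : X => dist z w) :=
  continuous_id.dist continuous_const

lemma L_open (x y : X) : IsOpen {z : X | dist z x < dist z y} :=
  isOpen_lt (distc_cont x) (distc_cont y)

/-- If `w ∉ S` and `S` is preconnected, the distance to `w` is injective on `S`. -/
lemma inj_on_conn (ump : ∀ y z : X, y ≠ z → ∃! x : X, dist x y = dist x z)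
    {S : Set X} (hS : IsPreconnected S) {w : X} (hw : w ∉ S)
    {x y : X} (hx : x ∈ S) (hy : y ∈ S) (hd : dist x w = dist y w) : x = y := by
  by_contra hxy
  have hm : dist w x = dist w y := by rw [dist_comm w x, dist_comm w y]; exact hd
  have hsep : ∀ z, z ≠ w → dist z x ≠ dist z y := by
    intro z hz he
    exact hz ((ump x y hxy).unique he hm)
  have hcov : S ⊆ {z | dist z x < dist z y} ∪ {z | dist z y < dist z x} := by
    intro z hz
    have hzw : z ≠ w := fun h => hw (h ▸ hz)
    rcases (hsep z hzw).lt_or_gt with h | h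
    · exact Or.inl h
    · exact Or.inr h
  obtain ⟨z, _, h1, h2⟩ := hS _ _ (L_open x y) (L_open y x) hcov
    ⟨x, hx, by simpa using dist_pos.mpr hxy⟩
    ⟨y, hy, by simpa using dist_pos.mpr (Ne.symm hxy)⟩
  simp only [mem_setOf_eq] at h1 h2
  exact lt_asymm h1 h2

/-- Two legs through `c` seen from an external point `w` equidistant... key dichotomy. -/
lemma opp (ump : ∀ y z : X, y ≠ z → ∃! x : X, dist x y = dist x z)
    {c w : X} {Pj Pk : Set X}
    (hKj : IsPreconnected (Pj ∪ {c})) (hKk : IsPreconnected (Pk ∪ {c}))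
    (hdisj : Disjoint Pj Pk) (hcPj : c ∉ Pj) (hcPk : c ∉ Pk)
    (hwj : w ∉ Pj) (hwk : w ∉ Pk) (hwc : w ≠ c)
    {uj uk : X} (huj : uj ∈ Pj) (huk : uk ∈ Pk) :
    dist uj w ≠ dist c w ∧ (dist c w < dist uj w ↔ dist uk w < dist c w) := by
  set r := dist c w with hr
  have hTconn : IsPreconnected ((Pj ∪ {c}) ∪ (Pk ∪ {c})) :=
    hKj.union c (Or.inr rfl) (Or.inr rfl) hKk
  have hwT : w ∉ (Pj ∪ {c}) ∪ (Pk ∪ {c}) := by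
    rintro ((h | h) | (h | h))
    · exact hwj h
    · exact hwc h
    · exact hwk h
    · exact hwc h
  have hcT : c ∈ (Pj ∪ {c}) ∪ (Pk ∪ {c}) := Or.inl (Or.inr rfl)
  have hujT : uj ∈ (Pj ∪ {c}) ∪ (Pk ∪ {c}) := Or.inl (Or.inl huj)
  have hukT : uk ∈ (Pj ∪ {c}) ∪ (Pk ∪ {c}) := Or.inr (Or.inl huk)
  have hne : dist uj w ≠ r := by
    intro h
    exact hcPj ((inj_on_conn ump hTconn hwT hujT hcT h) ▸ huj)
  have hnek : dist uk w ≠ r := by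
    intro h
    have := inj_on_conn ump hTconn hwT hukT hcT h
    exact hcPk (this ▸ huk)
  -- not both above r
  have hnotboth : ¬ (r < dist uj w ∧ r < dist uk w) := by
    rintro ⟨h1, h2⟩
    set t := (r + min (dist uj w) (dist uk w)) / 2 with ht
    have hrt : r < t := by
      have : r < min (dist uj w) (dist uk w) := lt_min h1 h2
      simp only [ht]; linarith
    have htj : t ≤ dist uj w := by
      have := min_le_left (dist uj w) (dist uk w); simp only [ht]; linarith
    have htk : t ≤ dist uk w := by
      have := min_le_right (dist uj w) (dist uk w); simp only [ht]; linarith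
    obtain ⟨α, hαK, hα⟩ := hKj.intermediate_value (f := fun z => dist z w)
      (Or.inr rfl) (Or.inl huj) ((distc_cont w).continuousOn) ⟨le_of_lt hrt, htj⟩
    obtain ⟨β, hβK, hβ⟩ := hKk.intermediate_value (f := fun z => dist z w)
      (Or.inr rfl) (Or.inl huk) ((distc_cont w).continuousOn) ⟨le_of_lt hrt, htk⟩
    have hαP : α ∈ Pj := by
      rcases hαK with h | h
      · exact h
      · exact absurd (h ▸ hα) (by simpa using (ne_of_gt hrt).symm)
    have hβP : β ∈ Pk := by
      rcases hβK with h | h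
      · exact h
      · exact absurd (h ▸ hβ) (by simpa using (ne_of_gt hrt).symm)
    have : α = β := inj_on_conn ump hTconn hwT (Or.inl (Or.inl hαP))
      (Or.inr (Or.inl hβP)) (hα.trans hβ.symm)
    exact (disjoint_left.mp hdisj hαP) (this ▸ hβP)
  -- not both below r
  have hnotboth' : ¬ (dist uj w < r ∧ dist uk w < r) := by
    rintro ⟨h1, h2⟩
    set t := (max (dist uj w) (dist uk w) + r) / 2 with ht
    have hrt : t < r := by
      have : max (dist uj w) (dist uk w) < r := max_lt h1 h2
      simp only [ht]; linarith
    have htj : dist uj w ≤ t := by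
      have := le_max_left (dist uj w) (dist uk w); simp only [ht]; linarith
    have htk : dist uk w ≤ t := by
      have := le_max_right (dist uj w) (dist uk w); simp only [ht]; linarith
    obtain ⟨α, hαK, hα⟩ := hKj.intermediate_value (f := fun z => dist z w)
      (Or.inl huj) (Or.inr rfl) ((distc_cont w).continuousOn) ⟨htj, le_of_lt hrt⟩
    obtain ⟨β, hβK, hβ⟩ := hKk.intermediate_value (f := fun z => dist z w)
      (Or.inl huk) (Or.inr rfl) ((distc_cont w).continuousOn) ⟨htk, le_of_lt hrt⟩
    have hαP : α ∈ Pj := by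
      rcases hαK with h | h
      · exact h
      · exact absurd (h ▸ hα) (by simpa using (ne_of_lt hrt).symm)
    have hβP : β ∈ Pk := by
      rcases hβK with h | h
      · exact h
      · exact absurd (h ▸ hβ) (by simpa using (ne_of_lt hrt).symm)
    have : α = β := inj_on_conn ump hTconn hwT (Or.inl (Or.inl hαP))
      (Or.inr (Or.inl hβP)) (hα.trans hβ.symm)
    exact (disjoint_left.mp hdisj hαP) (this ▸ hβP)
  refine ⟨hne, ?_, ?_⟩
  · intro h
    rcases lt_or_gt_of_ne hnek with h' | h'
    · exact h'
    · exact absurd ⟨h, h'⟩ hnotboth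
  · intro h
    rcases lt_or_gt_of_ne hne with h' | h'
    · exact absurd ⟨h', h⟩ hnotboth'
    · exact h'



variable [ConnectedSpace X]

/-- A point's complement cannot split into three nonempty open pieces. -/
lemma noThree (ump : ∀ y z : X, y ≠ z → ∃! x : X, dist x y = dist x z)
    {c : X} {P1 P2 P3 : Set X}
    (h1 : IsOpen P1) (h2 : IsOpen P2) (h3 : IsOpen P3)
    (hd12 : Disjoint P1 P2) (hd13 : Disjoint P1 P3) (hd23 : Disjoint P2 P3)
    (hn1 : P1.Nonempty) (hn2 : P2.Nonempty) (hn3 : P3.Nonempty)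
    (hU : P1 ∪ P2 ∪ P3 = {c}ᶜ) : False := by
  have hsub1 : P1 ⊆ {c}ᶜ := by rw [← hU]; intro z hz; exact Or.inl (Or.inl hz)
  have hsub2 : P2 ⊆ {c}ᶜ := by rw [← hU]; intro z hz; exact Or.inl (Or.inr hz)
  have hsub3 : P3 ⊆ {c}ᶜ := by rw [← hU]; intro z hz; exact Or.inr hz
  have hc1 : c ∉ P1 := fun h => hsub1 h rfl
  have hc2 : c ∉ P2 := fun h => hsub2 h rfl
  have hc3 : c ∉ P3 := fun h => hsub3 h rfl
  -- each leg ∪ {c} is preconnected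
  have hK1 : IsPreconnected (P1 ∪ {c}) := by
    apply cut_side h1 (h2.union h3)
    · exact disjoint_union_right.mpr ⟨hd12, hd13⟩
    · rw [← hU]; intro z hz; rw [union_assoc] at hz; exact hz
  have hK2 : IsPreconnected (P2 ∪ {c}) := by
    apply cut_side h2 (h1.union h3)
    · exact disjoint_union_right.mpr ⟨hd12.symm, hd23⟩
    · rw [← hU]; intro z hz
      rcases hz with (h | h) | h
      · exact Or.inr (Or.inl h)
      · exact Or.inl h
      · exact Or.inr (Or.inr h)
  have hK3 : IsPreconnected (P3 ∪ {c}) := by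
    apply cut_side h3 (h1.union h2)
    · exact disjoint_union_right.mpr ⟨hd13.symm, hd23.symm⟩
    · rw [← hU]; intro z hz
      rcases hz with (h | h) | h
      · exact Or.inr (Or.inl h)
      · exact Or.inr (Or.inr h)
      · exact Or.inl h
  obtain ⟨p1, hp1⟩ := hn1
  obtain ⟨p2, hp2⟩ := hn2
  obtain ⟨p3, hp3⟩ := hn3
  have hd1 : 0 < dist p1 c := dist_pos.mpr (fun h => hc1 (h ▸ hp1))
  have hd2 : 0 < dist p2 c := dist_pos.mpr (fun h => hc2 (h ▸ hp2))
  have hd3 : 0 < dist p3 c := dist_pos.mpr (fun h => hc3 (h ▸ hp3))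
  set r := min (dist p1 c) (min (dist p2 c) (dist p3 c)) with hrdef
  have hr : 0 < r := lt_min hd1 (lt_min hd2 hd3)
  -- pick `u i` on each leg at distance exactly `r` from `c`
  have pick : ∀ (P : Set X), IsPreconnected (P ∪ {c}) → c ∉ P →
      ∀ p ∈ P, r ≤ dist p c → ∃ u ∈ P, dist u c = r := by
    intro P hK hcP p hp hrp
    obtain ⟨u, huK, hu⟩ := hK.intermediate_value (f := fun z => dist z c)
      (Or.inr rfl) (Or.inl hp) ((distc_cont c).continuousOn)
      (by simp only [dist_self]; exact ⟨le_of_lt hr, hrp⟩)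
    have huP : u ∈ P := by
      rcases huK with h | h
      · exact h
      · rw [h] at hu; simp only [dist_self] at hu; exact absurd hu.symm (ne_of_gt hr)
    exact ⟨u, huP, hu⟩
  obtain ⟨u1, hu1, hru1⟩ := pick P1 hK1 hc1 p1 hp1 (min_le_left _ _)
  obtain ⟨u2, hu2, hru2⟩ := pick P2 hK2 hc2 p2 hp2
    (le_trans (min_le_right _ _) (min_le_left _ _))
  obtain ⟨u3, hu3, hru3⟩ := pick P3 hK3 hc3 p3 hp3
    (le_trans (min_le_right _ _) (min_le_right _ _))
  have hu1c : u1 ≠ c := fun h => hc1 (h ▸ hu1)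
  have hu2c : u2 ≠ c := fun h => hc2 (h ▸ hu2)
  have hu3c : u3 ≠ c := fun h => hc3 (h ▸ hu3)
  -- apply `opp` in five configurations
  have hcu1 : dist c u1 = r := by rw [dist_comm]; exact hru1
  have hcu2 : dist c u2 = r := by rw [dist_comm]; exact hru2
  have hcu3 : dist c u3 = r := by rw [dist_comm]; exact hru3
  have E1 := opp ump hK2 hK3 hd23 hc2 hc3
    (fun h => disjoint_left.mp hd12 hu1 h) (fun h => disjoint_left.mp hd13 hu1 h)
    hu1c hu2 hu3
  have E1' := opp ump hK3 hK2 hd23.symm hc3 hc2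
    (fun h => disjoint_left.mp hd13 hu1 h) (fun h => disjoint_left.mp hd12 hu1 h)
    hu1c hu3 hu2
  have E2 := opp ump hK1 hK3 hd13 hc1 hc3
    (fun h => disjoint_left.mp hd12.symm hu2 h) (fun h => disjoint_left.mp hd23 hu2 h)
    hu2c hu1 hu3
  have E2' := opp ump hK3 hK1 hd13.symm hc3 hc1
    (fun h => disjoint_left.mp hd23 hu2 h) (fun h => disjoint_left.mp hd12.symm hu2 h)
    hu2c hu3 hu1
  have E3 := opp ump hK1 hK2 hd12 hc1 hc2
    (fun h => disjoint_left.mp hd13.symm hu3 h) (fun h => disjoint_left.mp hd23.symm hu3 h)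
    hu3c hu1 hu2
  rw [hcu1] at E1 E1'
  rw [hcu2] at E2 E2'
  rw [hcu3] at E3
  simp only [dist_comm u2 u1, dist_comm u3 u1, dist_comm u3 u2] at E1 E1' E2 E2' E3
  -- notation: d12 = dist u1 u2 etc (E1 : r<d12 ↔ d13<r … after comm fixes)
  rcases E2.1.lt_or_gt with h12 | h12
  · -- d12 < r
    have h13 : r < dist u1 u3 := E1'.2.mpr h12
    have h23 : r < dist u2 u3 := E2'.2.mpr h12
    have := E3.2.mp h13
    exact lt_asymm h23 this
  · -- r < d12
    have h13 : dist u1 u3 < r := E1.2.mp h12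
    have h23 : dist u2 u3 < r := E2.2.mp h12
    have := E3.2.mpr h23
    exact lt_asymm h13 this

/-- The unique midpoint of two distinct points. -/
noncomputable def midOf (ump : ∀ y z : X, y ≠ z → ∃! x : X, dist x y = dist x z)
    {a b : X} (hab : a ≠ b) : X := (ump a b hab).exists.choose

lemma midOf_spec (ump : ∀ y z : X, y ≠ z → ∃! x : X, dist x y = dist x z)
    {a b : X} (hab : a ≠ b) :
    dist (midOf ump hab) a = dist (midOf ump hab) b := (ump a b hab).exists.choose_spec

lemma midOf_uniq (ump : ∀ y z : X, y ≠ z → ∃! x : X, dist x y = dist x z)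
    {a b : X} (hab : a ≠ b) {z : X} (hz : dist z a = dist z b) :
    z = midOf ump hab := (ump a b hab).unique hz (midOf_spec ump hab)

/-- The strict side `{z | dist z a < dist z b}` is preconnected. -/
lemma L_preconn (ump : ∀ y z : X, y ≠ z → ∃! x : X, dist x y = dist x z)
    {a b : X} (hab : a ≠ b) : IsPreconnected {z : X | dist z a < dist z b} := by
  set S := {z : X | dist z a < dist z b} with hS
  by_contra hnc
  rw [IsPreconnected] at hnc
  push_neg at hnc
  obtain ⟨u, v, hu, hv, hcov, hne1, hne2, hempty⟩ := hnc
  set m := midOf ump hab with hm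
  refine noThree ump (c := m) (P1 := S ∩ u) (P2 := S ∩ v)
    (P3 := {z : X | dist z b < dist z a}) ((L_open a b).inter hu) ((L_open a b).inter hv)
    (L_open b a) ?_ ?_ ?_ hne1 hne2 ⟨b, by simpa using dist_pos.mpr (Ne.symm hab)⟩ ?_
  · rw [disjoint_left]
    intro z hz1 hz2
    exact eq_empty_iff_forall_notMem.mp hempty z ⟨hz1.1, hz1.2, hz2.2⟩
  · rw [disjoint_left]
    rintro z ⟨hz1, _⟩ hz2
    simp only [hS, mem_setOf_eq] at hz1 hz2
    exact lt_asymm hz1 hz2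
  · rw [disjoint_left]
    rintro z ⟨hz1, _⟩ hz2
    simp only [hS, mem_setOf_eq] at hz1 hz2
    exact lt_asymm hz1 hz2
  · ext z
    simp only [mem_union, mem_inter_iff, mem_setOf_eq, mem_compl_iff, mem_singleton_iff]
    constructor
    · rintro ((⟨hz, _⟩ | ⟨hz, _⟩) | hz) hzm
      · rw [hzm] at hz; exact absurd (midOf_spec ump hab) (ne_of_lt hz)
      · rw [hzm] at hz; exact absurd (midOf_spec ump hab) (ne_of_lt hz)
      · rw [hzm] at hz; exact absurd (midOf_spec ump hab) (ne_of_gt hz)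
    · intro hz
      have : dist z a ≠ dist z b := fun he => hz (midOf_uniq ump hab he)
      rcases this.lt_or_gt with h | h
      · rcases hcov h with h' | h'
        · exact Or.inl (Or.inl ⟨h, h'⟩)
        · exact Or.inl (Or.inr ⟨h, h'⟩)
      · exact Or.inr h

/-- Sub-level sets of a continuous injective real function are preconnected. -/
lemma le_level_preconn {h : X → ℝ} (hc : Continuous h) (hi : Function.Injective h)
    (x : X) : IsPreconnected {z : X | h z ≤ h x} := by
  have hrel := rel_side isPreconnected_univ (mem_univ x)
    (A := {z : X | h z < h x}) (B := {z : X | h x < h z})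
    (isOpen_lt hc continuous_const) (isOpen_lt continuous_const hc)
    (by rw [disjoint_left]; intro z h1 h2
        simp only [mem_setOf_eq] at h1 h2; exact lt_asymm h1 h2)
    (by intro z hz
        have hzx : z ≠ x := by simpa using hz.2
        rcases (hi.ne hzx).lt_or_gt with h | h
        · exact Or.inl h
        · exact Or.inr h)
  have : (univ ∩ {z : X | h z < h x}) ∪ {x} = {z : X | h z ≤ h x} := by
    ext z
    simp only [univ_inter, mem_union, mem_setOf_eq, mem_singleton_iff]
    constructor
    · rintro (hz | hz)
      · exact le_of_lt hz
      · rw [hz]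
    · intro hz
      rcases lt_or_eq_of_le hz with h | h
      · exact Or.inl h
      · exact Or.inr (hi h)
  rwa [this] at hrel

lemma ge_level_preconn {h : X → ℝ} (hc : Continuous h) (hi : Function.Injective h)
    (x : X) : IsPreconnected {z : X | h x ≤ h z} := by
  have := le_level_preconn (h := fun z => -(h z)) (hc.neg)
    (fun p q hpq => hi (by simpa using neg_injective hpq)) x
  simpa using this

/-- Preimages of closed intervals with endpoints in the range are preconnected. -/
lemma Icc_preconn {h : X → ℝ} (hc : Continuous h) (hi : Function.Injective h)
    (x y : X) (hxy : h x ≤ h y) : IsPreconnected (h ⁻¹' Icc (h x) (h y)) := by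
  have hC : IsPreconnected {z : X | h x ≤ h z} := ge_level_preconn hc hi x
  have hrel := rel_side hC (show y ∈ {z : X | h x ≤ h z} from hxy)
    (A := {z : X | h z < h y}) (B := {z : X | h y < h z})
    (isOpen_lt hc continuous_const) (isOpen_lt continuous_const hc)
    (by rw [disjoint_left]; intro z h1 h2
        simp only [mem_setOf_eq] at h1 h2; exact lt_asymm h1 h2)
    (by intro z hz
        have hzy : z ≠ y := by simpa using hz.2
        rcases (hi.ne hzy).lt_or_gt with h | h
        · exact Or.inl h
        · exact Or.inr h)
  have : ({z : X | h x ≤ h z} ∩ {z : X | h z < h y}) ∪ {y} = h ⁻¹' Icc (h x) (h y) := by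
    ext z
    simp only [mem_union, mem_inter_iff, mem_setOf_eq, mem_singleton_iff, mem_preimage,
      mem_Icc]
    constructor
    · rintro (⟨hz1, hz2⟩ | hz)
      · exact ⟨hz1, le_of_lt hz2⟩
      · rw [hz]; exact ⟨hxy, le_refl _⟩
    · rintro ⟨hz1, hz2⟩
      rcases lt_or_eq_of_le hz2 with h | h
      · exact Or.inl ⟨hz1, h⟩
      · exact Or.inr (hi h)
  rwa [this] at hrel

open scoped Classical in
/-- The signed-distance coordinate attached to a pair of distinct points. -/
noncomputable def hfun (ump : ∀ y z : X, y ≠ z → ∃! x : X, dist x y = dist x z)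
    {a b : X} (hab : a ≠ b) : X → ℝ :=
  fun z => if dist z a ≤ dist z b then -(dist z (midOf ump hab))
           else dist z (midOf ump hab)

lemma hfun_cont (ump : ∀ y z : X, y ≠ z → ∃! x : X, dist x y = dist x z)
    {a b : X} (hab : a ≠ b) : Continuous (hfun ump hab) := by
  classical
  apply Continuous.if_le ((distc_cont _).neg) (distc_cont _) (distc_cont a) (distc_cont b)
  intro z hz
  have : z = midOf ump hab := midOf_uniq ump hab hz
  rw [this]
  simp [dist_self]

lemma hfun_inj (ump : ∀ y z : X, y ≠ z → ∃! x : X, dist x y = dist x z)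
    {a b : X} (hab : a ≠ b) : Function.Injective (hfun ump hab) := by
  classical
  set m := midOf ump hab with hmdef
  have hmspec : dist m a = dist m b := midOf_spec ump hab
  intro x y he
  unfold hfun at he
  by_cases hx : dist x a ≤ dist x b <;> by_cases hy : dist y a ≤ dist y b
  · rw [if_pos hx, if_pos hy] at he
    have hd : dist x m = dist y m := neg_injective he
    by_cases hxm : x = m
    · rw [hxm, dist_self] at hd
      rw [hxm]
      exact (dist_eq_zero.mp hd.symm).symm
    · by_cases hym : y = m
      · rw [hym, dist_self] at hd
        rw [hym]
        exact dist_eq_zero.mp hd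
      · have hxS : x ∈ {z : X | dist z a < dist z b} :=
          lt_of_le_of_ne hx (fun h => hxm (midOf_uniq ump hab h))
        have hyS : y ∈ {z : X | dist z a < dist z b} :=
          lt_of_le_of_ne hy (fun h => hym (midOf_uniq ump hab h))
        have hmS : m ∉ {z : X | dist z a < dist z b} := fun h =>
          absurd hmspec (ne_of_lt h)
        exact inj_on_conn ump (L_preconn ump hab) hmS hxS hyS hd
  · rw [if_pos hx, if_neg hy] at he
    have h1 : dist y m > 0 := dist_pos.mpr (fun h =>
      hy (le_of_eq ((h ▸ hmspec))))
    have h2 : -(dist x m) ≤ 0 := neg_nonpos.mpr dist_nonneg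
    linarith [he ▸ h2]
  · rw [if_neg hx, if_pos hy] at he
    have h1 : dist x m > 0 := dist_pos.mpr (fun h =>
      hx (le_of_eq ((h ▸ hmspec))))
    have h2 : -(dist y m) ≤ 0 := neg_nonpos.mpr dist_nonneg
    linarith [he ▸ h2]
  · rw [if_neg hx, if_neg hy] at he
    have hxS : x ∈ {z : X | dist z b < dist z a} := not_le.mp hx
    have hyS : y ∈ {z : X | dist z b < dist z a} := not_le.mp hy
    have hmS : m ∉ {z : X | dist z b < dist z a} := fun h =>
      absurd hmspec (ne_of_gt h)
    exact inj_on_conn ump (L_preconn ump (Ne.symm hab)) hmS hxS hyS he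

lemma midOf_swap (ump : ∀ y z : X, y ≠ z → ∃! x : X, dist x y = dist x z)
    {a b : X} (hab : a ≠ b) : midOf ump (Ne.symm hab) = midOf ump hab :=
  midOf_uniq ump hab (midOf_spec ump (Ne.symm hab)).symm

lemma hfun_swap (ump : ∀ y z : X, y ≠ z → ∃! x : X, dist x y = dist x z)
    {a b : X} (hab : a ≠ b) (z : X) :
    hfun ump (Ne.symm hab) z = -(hfun ump hab z) := by
  classical
  unfold hfun
  rw [midOf_swap ump hab]
  rcases lt_trichotomy (dist z a) (dist z b) with h | h | h
  · rw [if_pos (le_of_lt h), if_neg (not_le.mpr h)]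
    ring
  · have hzm : z = midOf ump hab := midOf_uniq ump hab h
    rw [if_pos (le_of_eq h.symm), if_pos (le_of_eq h), hzm, dist_self]
    ring
  · rw [if_neg (not_le.mpr h), if_pos (le_of_lt h)]

/-- Key lemma: there is no sequence of points staying `ε`-far from `x` whose
`hfun`-values approach `hfun x` from below. -/
lemma crux (ump : ∀ y z : X, y ≠ z → ∃! x : X, dist x y = dist x z)
    {a b : X} (hab : a ≠ b) (x : X) {ε : ℝ} (hε : 0 < ε)
    (H : ∀ δ, 0 < δ → ∃ z, ε ≤ dist z x ∧
      hfun ump hab x - δ < hfun ump hab z ∧ hfun ump hab z < hfun ump hab x) :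
    False := by
  set h := hfun ump hab with hh
  have hcont : Continuous h := hfun_cont ump hab
  have hinj : Function.Injective h := hfun_inj ump hab
  have step : ∀ δ, 0 < δ → ∃ y, dist y x = ε / 2 ∧ h x - δ < h y ∧ h y < h x := by
    intro δ hδ
    obtain ⟨z, hz1, hz2, hz3⟩ := H δ hδ
    have hIcc : IsPreconnected (h ⁻¹' Icc (h z) (h x)) :=
      Icc_preconn hcont hinj z x (le_of_lt hz3)
    obtain ⟨y, hyS, hy⟩ := hIcc.intermediate_value (f := fun w => dist w x)
      (show x ∈ _ from by simp [mem_preimage, mem_Icc, le_of_lt hz3])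
      (show z ∈ _ from by simp [mem_preimage, mem_Icc, le_of_lt hz3])
      ((distc_cont x).continuousOn)
      (by show ε / 2 ∈ Icc (dist x x) (dist z x)
          rw [dist_self]
          exact ⟨by linarith, by linarith⟩)
    replace hy : dist y x = ε / 2 := hy
    have hyx : y ≠ x := by
      intro hyx
      rw [hyx, dist_self] at hy
      linarith
    have hymem : h z ≤ h y ∧ h y ≤ h x := hyS
    have : h y ≠ h x := hinj.ne hyx
    exact ⟨y, hy, by linarith [hymem.1], lt_of_le_of_ne hymem.2 this⟩
  obtain ⟨y1, hy1d, hy1l, hy1u⟩ := step 1 one_pos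
  obtain ⟨y2, hy2d, hy2l, hy2u⟩ := step (h x - h y1) (by linarith)
  have h12 : h y1 < h y2 := by linarith
  have hne : y1 ≠ y2 := fun he => absurd (he ▸ h12) (lt_irrefl _)
  have hxm : dist x y1 = dist x y2 := by
    rw [dist_comm x y1, dist_comm x y2, hy1d, hy2d]
  have hsep : ∀ w, w ≠ x → dist w y1 ≠ dist w y2 :=
    fun w hw he => hw ((ump y1 y2 hne).unique he hxm)
  have hC : IsPreconnected (h ⁻¹' Icc (h y1) (h y2)) :=
    Icc_preconn hcont hinj y1 y2 (le_of_lt h12)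
  have hcov : h ⁻¹' Icc (h y1) (h y2) ⊆
      {w : X | dist w y1 < dist w y2} ∪ {w : X | dist w y2 < dist w y1} := by
    intro w hw
    have hwx : w ≠ x := by
      intro hwx
      have : h w ≤ h y2 := hw.2
      rw [hwx] at this
      linarith
    rcases (hsep w hwx).lt_or_gt with h' | h'
    · exact Or.inl h'
    · exact Or.inr h'
  obtain ⟨w, _, hw1, hw2⟩ := hC _ _ (L_open y1 y2) (L_open y2 y1) hcov
    ⟨y1, by simp [mem_preimage, mem_Icc, le_of_lt h12], by
      simpa using dist_pos.mpr hne⟩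
    ⟨y2, by simp [mem_preimage, mem_Icc, le_of_lt h12], by
      simpa using dist_pos.mpr (Ne.symm hne)⟩
  simp only [mem_setOf_eq] at hw1 hw2
  exact lt_asymm hw1 hw2

/-- Inverse continuity of the coordinate function. -/
lemma invcont (ump : ∀ y z : X, y ≠ z → ∃! x : X, dist x y = dist x z)
    {a b : X} (hab : a ≠ b) (x : X) {ε : ℝ} (hε : 0 < ε) :
    ∃ δ, 0 < δ ∧ ∀ z, |hfun ump hab z - hfun ump hab x| < δ → dist z x < ε := by
  set h := hfun ump hab with hh
  have hinj : Function.Injective h := hfun_inj ump hab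
  by_contra hcon
  push_neg at hcon
  have hcon' : ∀ δ, 0 < δ → ∃ z, |h z - h x| < δ ∧ ε ≤ dist z x := by
    intro δ hδ
    obtain ⟨z, hz1, hz2⟩ := hcon δ hδ
    exact ⟨z, hz1, hz2⟩
  by_cases hbelow : ∀ δ, 0 < δ → ∃ z, ε ≤ dist z x ∧ h x - δ < h z ∧ h z < h x
  · exact crux ump hab x hε hbelow
  · push_neg at hbelow
    obtain ⟨δ0, hδ0, hblock⟩ := hbelow
    refine crux ump (Ne.symm hab) x hε ?_
    intro δ hδ
    obtain ⟨z, hz1, hz2⟩ := hcon' (min δ δ0) (lt_min hδ hδ0)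
    have hzx : z ≠ x := by
      intro hzx
      rw [hzx, dist_self] at hz2
      linarith
    have habs := abs_lt.mp hz1
    have hzabove : h x < h z := by
      rcases (hinj.ne hzx).lt_or_gt with hlt | hlt
      · have h1 : h x - δ0 < h z := by
          have := min_le_right δ δ0
          linarith [habs.1]
        have := hblock z hz2 h1
        linarith
      · exact hlt
    refine ⟨z, hz2, ?_, ?_⟩
    · rw [hfun_swap ump hab z, hfun_swap ump hab x]
      have := min_le_left δ δ0
      have h2 : h z - h x < min δ δ0 := habs.2
      linarith
    · rw [hfun_swap ump hab z, hfun_swap ump hab x]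
      linarith

end BerardUMP

/-- Berard: a connected metric space whose metric has the unique midset property
(every midset `M(y,z) = {x | ρ(x,y) = ρ(x,z)}` for `y ≠ z` has exactly one point)
is homeomorphic to an interval (order-convex subset) of the real line. -/
theorem connected_ump_homeomorph_interval (X : Type*) [MetricSpace X] [ConnectedSpace X]
    (ump : ∀ y z : X, y ≠ z → ∃! x : X, dist x y = dist x z) :
    ∃ s : Set ℝ, s.OrdConnected ∧ Nonempty (X ≃ₜ s) := by
  rcases subsingleton_or_nontrivial X with hsub | hnt
  · refine ⟨{0}, Set.ordConnected_singleton, ⟨?_⟩⟩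
    haveI : Unique X := uniqueOfSubsingleton (Classical.arbitrary X)
    haveI : Unique ({0} : Set ℝ) := Set.uniqueSingleton 0
    exact Homeomorph.homeomorphOfUnique X ({0} : Set ℝ)
  · obtain ⟨a, b, hab⟩ := exists_pair_ne X
    set h := BerardUMP.hfun ump hab with hh
    have hcont : Continuous h := BerardUMP.hfun_cont ump hab
    have hinj : Function.Injective h := BerardUMP.hfun_inj ump hab
    refine ⟨Set.range h, ?_, ⟨?_⟩⟩
    · have hpre : IsPreconnected (Set.range h) := by
        rw [← Set.image_univ]
        exact isPreconnected_univ.image h hcont.continuousOn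
      exact hpre.ordConnected
    · refine Homeomorph.mk (Equiv.ofInjective h hinj) ?_ ?_
      · exact Continuous.subtype_mk hcont _
      · rw [Metric.continuous_iff]
        intro p ε hε
        set x := (Equiv.ofInjective h hinj).symm p with hxdef
        have hpx : h x = (p : ℝ) := by
          have := (Equiv.ofInjective h hinj).apply_symm_apply p
          have := congrArg Subtype.val this
          exact this
        obtain ⟨δ, hδ, hbound⟩ := BerardUMP.invcont ump hab x hε
        refine ⟨δ, hδ, ?_⟩
        intro q hq
        set z := (Equiv.ofInjective h hinj).symm q with hzdef
        have hqz : h z = (q : ℝ) := by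
          have := (Equiv.ofInjective h hinj).apply_symm_apply q
          have := congrArg Subtype.val this
          exact this
        have hdq : dist q p = |h z - h x| := by
          rw [Subtype.dist_eq, Real.dist_eq, hqz, hpx]
        have := hbound z (by rw [← hdq]; exact hq)
        exact this
end

section
/- Neither the subspace [0,1] ∪ ℤ of ℝ nor the subspace [0,1] ∪ ℚ of ℝ admits a compatible metric with the unique midset property. -/
open Set

theorem no_ump_aux (S : Set ℝ) (hIS : Set.Icc (0:ℝ) 1 ⊆ S)
    (hc : (S \ Set.Icc (0:ℝ) 1).Countable)
    (p₀ : ℝ) (hp₀S : p₀ ∈ S) (hp₀ : p₀ ∉ Set.Icc (0:ℝ) 1) :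
    ¬ ∃ m : MetricSpace S,
        m.toUniformSpace.toTopologicalSpace = (inferInstance : TopologicalSpace S) ∧
        ∀ y z : S, y ≠ z → ∃! x, m.dist x y = m.dist x z := by
  rintro ⟨m, htop, hump⟩
  haveI : PreconnectedSpace (Set.Icc (0:ℝ) 1) := Subtype.preconnectedSpace isPreconnected_Icc
  -- the inclusion of K := Icc 0 1 into S
  set K := Set.Icc (0:ℝ) 1 with hK
  let e : K → S := fun t => ⟨t.1, hIS t.2⟩
  have he : Continuous e := Continuous.subtype_mk continuous_subtype_val _
  have einj : Function.Injective e := by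
    intro a b h
    have h2 : (e a : ℝ) = e b := congrArg Subtype.val h
    exact Subtype.ext h2
  -- continuity of the metric wrt the subspace topology
  have hd : Continuous (fun q : S × S => m.dist q.1 q.2) := by
    have h1 : @Continuous (S × S) ℝ
        (@instTopologicalSpaceProd S S m.toUniformSpace.toTopologicalSpace
          m.toUniformSpace.toTopologicalSpace) _ (fun q : S × S => m.dist q.1 q.2) :=
      @continuous_dist S m.toPseudoMetricSpace
    rw [htop] at h1
    exact h1
  have hd2 : ∀ (f g : K → S), Continuous f → Continuous g →
      Continuous (fun t => m.dist (f t) (g t)) := fun f g hf hg =>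
    hd.comp (hf.prodMk hg)
  have dself : ∀ x : S, m.dist x x = 0 := fun x => m.dist_self x
  have dpos : ∀ x y : S, x ≠ y → 0 < m.dist x y := by
    intro x y h
    exact (@dist_pos S m x y).mpr h
  -- injectivity of distance-to-w on K, for w outside Icc
  have hinj : ∀ w : S, (w:ℝ) ∉ K → ∀ y z : K,
      m.dist w (e y) = m.dist w (e z) → y = z := by
    intro w hw y z hyz
    by_contra hne
    obtain ⟨x, hx, hxu⟩ := hump (e y) (e z) (fun h => hne (einj h))
    have hwx : w = x := hxu w hyz
    -- find a midpoint inside K by IVT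
    have hφ : Continuous (fun s : K => m.dist (e s) (e y) - m.dist (e s) (e z)) :=
      (hd2 _ _ he (continuous_const)).sub (hd2 _ _ he continuous_const)
    have h0 : (0:ℝ) ∈ Icc ((fun s : K => m.dist (e s) (e y) - m.dist (e s) (e z)) y)
        ((fun s : K => m.dist (e s) (e y) - m.dist (e s) (e z)) z) := by
      constructor
      · simp only [dself, zero_sub]
        have := dpos (e y) (e z) (fun h => hne (einj h))
        linarith
      · simp only [dself, sub_zero]
        have := dpos (e z) (e y) (fun h => hne (einj (h.symm)) )
        positivity
    obtain ⟨s, hs⟩ := intermediate_value_univ y z hφ h0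
    have hs' : m.dist (e s) (e y) = m.dist (e s) (e z) := by
      have := hs; dsimp at this; linarith
    have : e s = x := hxu (e s) hs'
    rw [← hwx] at this
    have hmem : (w:ℝ) ∈ K := by rw [← this]; exact s.2
    exact hw hmem
  -- the point outside Icc
  let p : S := ⟨p₀, hp₀S⟩
  have hpe : ∀ t : K, p ≠ e t := by
    intro t h
    have h2 : p₀ = (t : ℝ) := congrArg Subtype.val h
    rw [h2] at hp₀
    exact hp₀ t.2
  by_cases hZ : ∀ t : K, ∃ s : K, m.dist (e s) p = m.dist (e s) (e t)
  · -- Case 1: every midpoint lies in K : continuous fixed-point-free self-map of [0,1]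
    choose w hw using hZ
    have hwu : ∀ t s, m.dist (e s) p = m.dist (e s) (e t) → s = w t := by
      intro t s hs
      obtain ⟨x, hx, hxu⟩ := hump p (e t) (hpe t)
      exact einj ((hxu (e s) hs).trans (hxu (e (w t)) (hw t)).symm)
    have hwt : ∀ t, w t ≠ t := by
      intro t h
      have h2 := hw t
      rw [h, dself] at h2
      exact (dpos (e t) p (fun hh => (hpe t) hh.symm)).ne' h2
    have hcw : Continuous w := by
      rw [continuous_iff_isClosed]
      intro C hC
      have hset : IsClosed {q : K × K | q.2 ∈ C ∧
          m.dist (e q.2) p = m.dist (e q.2) (e q.1)} := by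
        apply IsClosed.inter
        · exact hC.preimage continuous_snd
        · exact isClosed_eq (hd.comp ((he.comp continuous_snd).prodMk continuous_const))
            (hd.comp ((he.comp continuous_snd).prodMk (he.comp continuous_fst)))
      have himg : w ⁻¹' C = Prod.fst '' {q : K × K | q.2 ∈ C ∧
          m.dist (e q.2) p = m.dist (e q.2) (e q.1)} := by
        ext t
        constructor
        · intro ht
          exact ⟨(t, w t), ⟨ht, hw t⟩, rfl⟩
        · rintro ⟨⟨t', s⟩, ⟨hsC, hs⟩, rfl⟩
          have h3 := hwu _ _ hs
          simpa [← h3] using hsC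
      rw [himg]
      exact isClosedMap_fst_of_compactSpace _ hset
    have k0mem : (0:ℝ) ∈ K := by constructor <;> norm_num
    have k1mem : (1:ℝ) ∈ K := by constructor <;> norm_num
    have hψ : Continuous (fun t : K => ((w t : ℝ) - (t : ℝ))) :=
      (continuous_subtype_val.comp hcw).sub continuous_subtype_val
    have h0m : (0:ℝ) ∈ Icc ((fun t : K => ((w t : ℝ) - (t : ℝ))) ⟨1, k1mem⟩)
        ((fun t : K => ((w t : ℝ) - (t : ℝ))) ⟨0, k0mem⟩) := by
      constructor
      · have h1 : (w ⟨1, k1mem⟩ : ℝ) ≤ 1 := (w ⟨1, k1mem⟩).2.2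
        simpa using h1
      · have h1 : (0:ℝ) ≤ (w ⟨0, k0mem⟩ : ℝ) := (w ⟨0, k0mem⟩).2.1
        simpa using h1
    obtain ⟨t, ht⟩ := intermediate_value_univ ⟨1, k1mem⟩ ⟨0, k0mem⟩ hψ h0m
    have hfix : w t = t := Subtype.ext (by dsimp at ht; linarith)
    exact hwt t hfix
  · -- Case 2: some t₀ has its midpoint outside K
    push_neg at hZ
    obtain ⟨t₀, ht₀⟩ := hZ
    have hpos : ∀ s : K, 0 < m.dist (e s) p - m.dist (e s) (e t₀) := by
      intro s
      by_contra hle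
      push_neg at hle
      have hφ : Continuous (fun u : K => m.dist (e u) p - m.dist (e u) (e t₀)) :=
        (hd2 _ _ he continuous_const).sub (hd2 _ _ he continuous_const)
      have h0 : (0:ℝ) ∈ Icc ((fun u : K => m.dist (e u) p - m.dist (e u) (e t₀)) s)
          ((fun u : K => m.dist (e u) p - m.dist (e u) (e t₀)) t₀) := by
        refine ⟨hle, ?_⟩
        have h2 := dpos (e t₀) p (fun hh => (hpe t₀) hh.symm)
        dsimp
        rw [dself]
        linarith
      obtain ⟨u, hu⟩ := intermediate_value_univ s t₀ hφ h0
      have h3 : m.dist (e u) p = m.dist (e u) (e t₀) := by dsimp at hu; linarith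
      exact ht₀ u h3
    set U : Set K := {t | ∀ s : K, 0 < m.dist (e s) p - m.dist (e s) (e t)} with hU
    have ht₀U : t₀ ∈ U := hpos
    have hUopen : IsOpen U := by
      have hcompl : Uᶜ = Prod.fst ''
          {q : K × K | m.dist (e q.2) p - m.dist (e q.2) (e q.1) ≤ 0} := by
        ext t
        simp only [mem_compl_iff, mem_setOf_eq, mem_image, hU]
        constructor
        · intro ht
          push_neg at ht
          obtain ⟨s, hs⟩ := ht
          exact ⟨(t, s), hs, rfl⟩
        · rintro ⟨⟨t', s⟩, hs, rfl⟩
          push_neg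
          exact ⟨s, hs⟩
      rw [← isClosed_compl_iff, hcompl]
      apply isClosedMap_fst_of_compactSpace
      exact isClosed_le
        ((hd.comp ((he.comp continuous_snd).prodMk continuous_const)).sub
          (hd.comp ((he.comp continuous_snd).prodMk (he.comp continuous_fst))))
        continuous_const
    have hex : ∀ t : K, ∃ x : S, (m.dist x p = m.dist x (e t)) ∧
        ∀ y, m.dist y p = m.dist y (e t) → y = x := fun t => hump p (e t) (hpe t)
    choose md hmd hmdu using hex
    have hout : ∀ t ∈ U, ((md t : S) : ℝ) ∈ S \ K := by
      intro t ht
      refine ⟨(md t).2, ?_⟩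
      intro hmem
      have h4 := ht ⟨((md t : S) : ℝ), hmem⟩
      have he' : e ⟨((md t : S) : ℝ), hmem⟩ = md t := Subtype.ext rfl
      rw [he', hmd t, sub_self] at h4
      exact lt_irrefl 0 h4
    have hinjU : InjOn md U := by
      intro a ha b hb hab
      have h1 : m.dist (md a) (e a) = m.dist (md a) (e b) := by
        rw [← hmd a, hab]
        exact hmd b
      exact hinj (md a) (hout a ha).2 a b h1
    have hTc : (Subtype.val ⁻¹' (S \ K) : Set S).Countable :=
      hc.preimage Subtype.val_injective
    have hUc : U.Countable := by
      apply Set.countable_of_injective_of_countable_image hinjU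
      apply hTc.mono
      rintro x ⟨t, ht, rfl⟩
      exact hout t ht
    -- U is open, nonempty and countable in [0,1] : impossible
    obtain ⟨V, hV, hVU⟩ := isOpen_induced_iff.mp hUopen
    have ht₀V : (t₀ : ℝ) ∈ V := by
      rw [← hVU] at ht₀U
      exact ht₀U
    obtain ⟨ε, hε, hball⟩ := Metric.isOpen_iff.mp hV _ ht₀V
    -- produce a nondegenerate interval inside val '' U
    obtain ⟨a, b, hab, hsub⟩ : ∃ a b : ℝ, a < b ∧ Ioo a b ⊆ K ∩ Metric.ball (t₀:ℝ) ε := by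
      rcases lt_or_eq_of_le t₀.2.2 with h1 | h1
      · refine ⟨(t₀:ℝ), min 1 ((t₀:ℝ) + ε), lt_min h1 (by linarith), ?_⟩
        rintro x ⟨hx1, hx2⟩
        have hx3 : x < 1 ∨ x ≤ 1 := Or.inr (le_of_lt (lt_of_lt_of_le hx2 (min_le_left _ _)))
        refine ⟨⟨le_trans t₀.2.1 (le_of_lt hx1), le_of_lt (lt_of_lt_of_le hx2 (min_le_left _ _))⟩, ?_⟩
        rw [Real.ball_eq_Ioo]
        constructor
        · linarith
        · exact lt_of_lt_of_le hx2 (min_le_right _ _)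
      · refine ⟨max 0 ((t₀:ℝ) - ε), (t₀:ℝ), max_lt (by rw [h1]; norm_num) (by linarith), ?_⟩
        rintro x ⟨hx1, hx2⟩
        have hx0 : (0:ℝ) ≤ x := le_of_lt (lt_of_le_of_lt (le_max_left _ _) hx1)
        refine ⟨⟨hx0, le_of_lt (lt_of_lt_of_le hx2 t₀.2.2)⟩, ?_⟩
        rw [Real.ball_eq_Ioo]
        constructor
        · exact lt_of_le_of_lt (le_max_right _ _) hx1
        · linarith
    have hIooU : Ioo a b ⊆ Subtype.val '' U := by
      intro x hx
      obtain ⟨hxK, hxB⟩ := hsub hx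
      refine ⟨⟨x, hxK⟩, ?_, rfl⟩
      rw [← hVU]
      exact hball hxB
    have hIooC : (Ioo a b).Countable := (hUc.image _).mono hIooU
    have := hIooC.measure_zero (MeasureTheory.volume)
    rw [Real.volume_Ioo] at this
    exact (ENNReal.ofReal_pos.mpr (by linarith)).ne' this


/-- Ohta–Ono / Ito–Ohta–Ono: neither `[0,1] ∪ ℤ` nor `[0,1] ∪ ℚ`, as subspaces of
`ℝ`, admits a compatible metric with the unique midset property. -/
theorem Icc_union_int_and_Icc_union_rat_no_ump :
    (¬ ∃ m : MetricSpace (Set.Icc (0:ℝ) 1 ∪ Set.range ((↑) : ℤ → ℝ) : Set ℝ),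
        m.toUniformSpace.toTopologicalSpace
          = (inferInstance :
              TopologicalSpace (Set.Icc (0:ℝ) 1 ∪ Set.range ((↑) : ℤ → ℝ) : Set ℝ)) ∧
        ∀ y z : (Set.Icc (0:ℝ) 1 ∪ Set.range ((↑) : ℤ → ℝ) : Set ℝ),
          y ≠ z → ∃! x, m.dist x y = m.dist x z) ∧
    (¬ ∃ m : MetricSpace (Set.Icc (0:ℝ) 1 ∪ Set.range ((↑) : ℚ → ℝ) : Set ℝ),
        m.toUniformSpace.toTopologicalSpace
          = (inferInstance :
              TopologicalSpace (Set.Icc (0:ℝ) 1 ∪ Set.range ((↑) : ℚ → ℝ) : Set ℝ)) ∧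
        ∀ y z : (Set.Icc (0:ℝ) 1 ∪ Set.range ((↑) : ℚ → ℝ) : Set ℝ),
          y ≠ z → ∃! x, m.dist x y = m.dist x z) := by
  constructor
  · refine no_ump_aux _ Set.subset_union_left ?_ 2 (Or.inr ⟨2, by norm_num⟩)
      (by simp only [Set.mem_Icc]; norm_num)
    apply (Set.countable_range ((↑) : ℤ → ℝ)).mono
    rintro x ⟨hx1 | hx1, hx2⟩
    · exact absurd hx1 hx2
    · exact hx1
  · refine no_ump_aux _ Set.subset_union_left ?_ 2 (Or.inr ⟨2, by norm_num⟩)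
      (by simp only [Set.mem_Icc]; norm_num)
    apply (Set.countable_range ((↑) : ℚ → ℝ)).mono
    rintro x ⟨hx1 | hx1, hx2⟩
    · exact absurd hx1 hx2
    · exact hx1
end

section
/- A discrete topological space D admits a compatible metric with the unique midset property if and only if the cardinality |D| satisfies |D| ≠ 2, |D| ≠ 4, and |D| ≤ 𝔠, where 𝔠 is the cardinality of the continuum. -/
/-!
A point of the midset `M(y, z)` differs from `y` and `z`, so two points are impossible. On four
points the midset of each pair is exactly one of the two remaining points; this gives six exclusive
alternatives between equalities of the six distances, and no equality pattern meets all of them.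
A point `x` is determined by `(ρ(x, a), ρ(x, b))` for any `a ≠ b`, because two points with the
same pair would have both `a` and `b` in their midset; hence `|D| ≤ 𝔠`.

Conversely, a symmetric `p : D → D → α` taking the value `a₀` exactly on the diagonal and having
unique midsets becomes a compatible metric once `α` is injected into `{0} ∪ [1, 2]` with
`a₀ ↦ 0`, which is possible when `|α| ≤ 𝔠`. In an abelian group with unique halving,
`p x y = {x - y, y - x}` has `M(y, z) = {(y + z) / 2}`: take `ℤ/n` for odd `n` and the finitely
supported functions `D → ℤ/3` for infinite `D`. Six points are given by an explicit table. For
`2k + 4 ≥ 8` points take a hub `h`, a point `q` and a path `0, …, 2k+1` whose points are paired by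
`0 ↔ 2k+1` and `i ↔ i + k`: `h` is at distance `1` from the path and so are partners from each
other, `ρ(q, 0) = 1`, `ρ(q, i) = ρ(i - 1, i)` for `i > 0`, and all other distances are distinct.
-/

open Cardinal Function Set

universe u v w

structure IsUMPDistance {X : Type u} {α : Type v} (p : X → X → α) (a₀ : α) : Prop where
  eq_iff : ∀ x y, p x y = a₀ ↔ x = y
  symm : ∀ x y, p x y = p y x
  existsUnique_midpoint : ∀ y z, y ≠ z → ∃! x, p x y = p x z

/-- `a, …, f` stand for the distances `01, 02, 03, 12, 13, 23` between four points. -/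
theorem not_midset_pattern_fin_six : ∀ a b c d e f : Fin 6,
    ¬ (Xor (b = d) (c = e) ∧ Xor (a = d) (c = f) ∧ Xor (a = e) (b = f) ∧
      Xor (a = b) (e = f) ∧ Xor (a = c) (d = f) ∧ Xor (b = c) (d = e)) := by
  unfold Xor; decide

theorem not_midset_pattern {β : Type v} (v : Fin 6 → β) :
    ¬ (Xor (v 1 = v 3) (v 2 = v 4) ∧ Xor (v 0 = v 3) (v 2 = v 5) ∧ Xor (v 0 = v 4) (v 1 = v 5) ∧
      Xor (v 0 = v 1) (v 4 = v 5) ∧ Xor (v 0 = v 2) (v 3 = v 5) ∧ Xor (v 1 = v 2) (v 3 = v 4)) := by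
  have hv : ∀ i j, invFun v (v i) = invFun v (v j) ↔ v i = v j := fun i j =>
    ⟨fun hij => by rw [← invFun_eq (f := v) ⟨i, rfl⟩, hij, invFun_eq (f := v) ⟨j, rfl⟩],
      congrArg (invFun v)⟩
  simp only [← hv]
  exact not_midset_pattern_fin_six _ _ _ _ _ _

theorem exists_metricSpace_dist_eq {X : Type u} [t : TopologicalSpace X] [DiscreteTopology X]
    (q : X → X → ℝ) (hq₀ : ∀ x, q x x = 0) (hq : ∀ x y, q x y = q y x)
    (hq₁₂ : ∀ x y, x ≠ y → q x y ∈ Icc 1 2) :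
    ∃ m : MetricSpace X, m.toUniformSpace.toTopologicalSpace = t ∧ m.dist = q := by
  have hq_lt_one : ∀ x y, q x y < 1 → x = y := fun x y hxy => by
    by_contra hne
    exact (hq₁₂ x y hne).1.not_gt hxy
  have hq_nonneg : ∀ x y, 0 ≤ q x y := fun x y => by
    rcases eq_or_ne x y with rfl | hne
    · exact (hq₀ x).ge
    · exact zero_le_one.trans (hq₁₂ x y hne).1
  have htriangle : ∀ x y z, q x z ≤ q x y + q y z := fun x y z => by
    rcases eq_or_ne x z with rfl | hxz
    · simpa [hq₀] using add_nonneg (hq_nonneg x y) (hq_nonneg y x)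
    rcases eq_or_ne x y with rfl | hxy
    · simp [hq₀]
    rcases eq_or_ne y z with rfl | hyz
    · simp [hq₀]
    linarith [(hq₁₂ x z hxz).2, (hq₁₂ x y hxy).1, (hq₁₂ y z hyz).1]
  refine ⟨.ofDistTopology q hq₀ hq htriangle (fun s => ?_) fun x y h => hq_lt_one x y (by simp [h]),
    rfl, rfl⟩
  exact ⟨fun _ x hx => ⟨1, one_pos, fun y hy => hq_lt_one x y hy ▸ hx⟩,
    fun _ => isOpen_discrete s⟩

theorem exists_injective_real_of_mk_le_continuum {α : Type v} (hα : #α ≤ 𝔠) (a₀ : α) :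
    ∃ f : α → ℝ, Injective f ∧ f a₀ = 0 ∧ ∀ a, a ≠ a₀ → f a ∈ Icc 1 2 := by
  classical
  obtain ⟨j⟩ : Nonempty (α ↪ Icc (1 : ℝ) 2) := lift_mk_le'.mp <| by
    simpa [mk_Icc_real one_lt_two] using hα
  refine ⟨fun a => if a = a₀ then 0 else j a, fun a b hab => ?_, if_pos rfl,
    fun a ha => by simp [ha]⟩
  have hj : ∀ a, (j a : ℝ) ≠ 0 := fun a h0 => by linarith [(j a).2.1]
  by_cases ha : a = a₀ <;> by_cases hb : b = a₀ <;> simp only [ha, hb, if_true, if_false] at hab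
  · exact ha.trans hb.symm
  · exact absurd hab.symm (hj b)
  · exact absurd hab (hj a)
  · exact j.injective (Subtype.ext hab)

namespace IsUMPDistance

variable {X : Type u} {Y : Type w} {α : Type v} {p : X → X → α} {a₀ : α}

theorem ne_left (h : IsUMPDistance p a₀) {x y z : X} (hyz : y ≠ z) (hx : p x y = p x z) :
    x ≠ y := by
  rintro rfl
  exact hyz ((h.eq_iff _ _).mp (hx.symm.trans ((h.eq_iff _ _).mpr rfl)))

theorem ne_right (h : IsUMPDistance p a₀) {x y z : X} (hyz : y ≠ z) (hx : p x y = p x z) :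
    x ≠ z :=
  h.ne_left hyz.symm hx.symm

theorem comp_equiv (h : IsUMPDistance p a₀) (e : Y ≃ X) :
    IsUMPDistance (fun x y => p (e x) (e y)) a₀ where
  eq_iff x y := (h.eq_iff _ _).trans e.injective.eq_iff
  symm x y := h.symm _ _
  existsUnique_midpoint y z hyz := by
    obtain ⟨x, hx, hx'⟩ := h.existsUnique_midpoint (e y) (e z) (e.injective.ne hyz)
    exact ⟨e.symm x, by simpa using hx, fun x' hx'' => e.eq_symm_apply.mpr (hx' _ hx'')⟩

theorem comp_injective {β : Type w} (h : IsUMPDistance p a₀) {f : α → β} (hf : Injective f) :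
    IsUMPDistance (fun x y => f (p x y)) (f a₀) where
  eq_iff x y := hf.eq_iff.trans (h.eq_iff x y)
  symm x y := congrArg f (h.symm x y)
  existsUnique_midpoint y z hyz := by
    simpa only [hf.eq_iff] using h.existsUnique_midpoint y z hyz

theorem not_fin_two (p : Fin 2 → Fin 2 → α) : ¬ IsUMPDistance p a₀ := by
  intro h
  obtain ⟨x, hx, -⟩ := h.existsUnique_midpoint 0 1 (by decide)
  have := h.ne_left (by decide) hx
  have := h.ne_right (by decide) hx
  omega

theorem card_ne_two (h : IsUMPDistance p a₀) : #X ≠ 2 := fun h2 =>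
  let ⟨e⟩ := mk_eq_nat_iff.mp h2
  not_fin_two _ (h.comp_equiv e.symm)

theorem xor_of_forall_eq_or (h : IsUMPDistance p a₀) {y z u w : X} (hyz : y ≠ z) (huw : u ≠ w)
    (hX : ∀ x, x = y ∨ x = z ∨ x = u ∨ x = w) : Xor (p u y = p u z) (p w y = p w z) := by
  obtain ⟨x, hx, hx'⟩ := h.existsUnique_midpoint y z hyz
  rcases hX x with rfl | rfl | rfl | rfl
  · exact absurd rfl (h.ne_left hyz hx)
  · exact absurd rfl (h.ne_right hyz hx)
  · exact .inl ⟨hx, fun hw => huw (hx' w hw).symm⟩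
  · exact .inr ⟨hx, fun hu => huw (hx' u hu)⟩

theorem not_fin_four (p : Fin 4 → Fin 4 → α) : ¬ IsUMPDistance p a₀ := by
  intro h
  have hxor (y z u w : Fin 4) (hyz : y ≠ z) (huw : u ≠ w)
      (hX : ∀ x, x = y ∨ x = z ∨ x = u ∨ x = w) := h.xor_of_forall_eq_or hyz huw hX
  have := hxor 0 1 2 3 (by decide) (by decide) (by decide)
  have := hxor 0 2 1 3 (by decide) (by decide) (by decide)
  have := hxor 0 3 1 2 (by decide) (by decide) (by decide)
  have := hxor 1 2 0 3 (by decide) (by decide) (by decide)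
  have := hxor 1 3 0 2 (by decide) (by decide) (by decide)
  have := hxor 2 3 0 1 (by decide) (by decide) (by decide)
  apply not_midset_pattern ![p 0 1, p 0 2, p 0 3, p 1 2, p 1 3, p 2 3]
  simp_all [h.symm]

theorem card_ne_four (h : IsUMPDistance p a₀) : #X ≠ 4 := fun h4 =>
  let ⟨e⟩ := mk_eq_nat_iff.mp h4
  not_fin_four _ (h.comp_equiv e.symm)

theorem injective_pair (h : IsUMPDistance p a₀) {a b : X} (hab : a ≠ b) :
    Injective fun x => (p x a, p x b) := by
  intro x x' hxx'
  by_contra hne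
  simp only [Prod.mk.injEq] at hxx'
  obtain ⟨m, -, hm⟩ := h.existsUnique_midpoint x x' hne
  exact hab ((hm a ((h.symm a x).trans (hxx'.1.trans (h.symm x' a)))).trans
    (hm b ((h.symm b x).trans (hxx'.2.trans (h.symm x' b)))).symm)

theorem card_le_continuum {p : X → X → ℝ} {a₀ : ℝ} (h : IsUMPDistance p a₀) : #X ≤ 𝔠 := by
  rcases subsingleton_or_nontrivial X with hX | ⟨a, b, hab⟩
  · exact le_one_iff_subsingleton.mpr hX |>.trans (one_lt_aleph0.le.trans aleph0_le_continuum)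
  · simpa [mk_prod, mk_real] using lift_mk_le'.mpr ⟨⟨_, h.injective_pair hab⟩⟩

theorem exists_metricSpace [TopologicalSpace Y] [DiscreteTopology Y] (h : IsUMPDistance p a₀)
    (hα : #α ≤ 𝔠) (e : Y ≃ X) :
    ∃ m : MetricSpace Y, m.toUniformSpace.toTopologicalSpace = ‹_› ∧ IsUMPDistance m.dist 0 := by
  obtain ⟨f, hf, hf₀, hf₁₂⟩ := exists_injective_real_of_mk_le_continuum hα a₀
  have hq := (h.comp_equiv e).comp_injective hf
  rw [hf₀] at hq
  obtain ⟨m, hm, hdist⟩ := exists_metricSpace_dist_eq _ (fun x => (hq.eq_iff x x).mpr rfl) hq.symm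
    fun x y hxy => hf₁₂ _ fun h0 => hxy <| by simpa using (h.eq_iff _ _).mp h0
  exact ⟨m, hm, hdist ▸ hq⟩

end IsUMPDistance

theorem isUMPDistance_of_subsingleton {X : Type u} [Subsingleton X] :
    IsUMPDistance (fun _ _ : X => ()) () where
  eq_iff x y := iff_of_true rfl (Subsingleton.elim x y)
  symm _ _ := rfl
  existsUnique_midpoint y z hyz := absurd (Subsingleton.elim y z) hyz

theorem isUMPDistance_sub {G : Type u} [AddCommGroup G] (hG : Bijective fun x : G => x + x) :
    IsUMPDistance (fun x y : G => s(x - y, y - x)) s(0, 0) where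
  eq_iff x y := by simp +contextual [sub_eq_zero]
  symm x y := Sym2.eq_swap
  existsUnique_midpoint y z hyz := by
    have key : ∀ x, s(x - y, y - x) = s(x - z, z - x) ↔ x + x = y + z := fun x => by
      simp only [Sym2.eq_iff, sub_right_inj, sub_left_inj, hyz, false_or,
        sub_eq_sub_iff_add_eq_add, add_comm z y, eq_comm (a := y + z), and_self]
    simpa only [key] using hG.existsUnique (y + z)

theorem bijective_add_self_of_isUnit_two {R M : Type*} [Semiring R] [AddCommMonoid M]
    [Module R M] (h : IsUnit (2 : R)) : Bijective fun x : M => x + x := by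
  simpa only [two_smul] using h.smul_bijective (β := M)

theorem ZMod.isUnit_two {n : ℕ} (hn : Odd n) : IsUnit (2 : ZMod n) := by
  exact_mod_cast (ZMod.isUnit_iff_coprime 2 n).mpr (Nat.coprime_two_left.mpr hn)

def table6 : Fin 6 → Fin 6 → ℕ :=
  ![![0, 1, 1, 2, 2, 1], ![1, 0, 1, 1, 3, 3], ![1, 1, 0, 4, 1, 4],
    ![2, 1, 4, 0, 3, 2], ![2, 3, 1, 3, 0, 4], ![1, 3, 4, 2, 4, 0]]

theorem isUMPDistance_table6 : IsUMPDistance table6 0 where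
  eq_iff := by decide
  symm := by decide
  existsUnique_midpoint := by unfold ExistsUnique; decide

namespace Hub

variable {k : ℕ}

def IsPartner (k i j : ℕ) : Prop :=
  i = 0 ∧ j = 2 * k + 1 ∨ j = 0 ∧ i = 2 * k + 1 ∨
    0 < i ∧ i ≤ k ∧ j = i + k ∨ 0 < j ∧ j ≤ k ∧ i = j + k

instance (k : ℕ) : DecidableRel (IsPartner k) := fun _ _ => by unfold IsPartner; infer_instance

theorem exists_isPartner {i : ℕ} (hi : i < 2 * k + 2) : ∃ j < 2 * k + 2, IsPartner k j i :=
  ⟨if i = 0 then 2 * k + 1 else if i = 2 * k + 1 then 0 else if i ≤ k then i + k else i - k,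
    by split_ifs <;> omega, by unfold IsPartner; split_ifs <;> omega⟩

/-- Distances take values in `ℕ ⊕ Sym2 ℕ`: `inl n` is the number `n`, and `inr e` is a value
private to the edge `e`. -/
def pathDist (k i j : ℕ) : ℕ ⊕ Sym2 ℕ :=
  if i = j then .inl 0 else if IsPartner k i j then .inl 1 else .inr s(i, j)

def farDist (i : ℕ) : ℕ ⊕ Sym2 ℕ :=
  if i = 0 then .inl 1 else .inr s(i - 1, i)

theorem pathDist_comm (i j : ℕ) : pathDist k i j = pathDist k j i := by
  have hP : IsPartner k i j ↔ IsPartner k j i := by unfold IsPartner; omega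
  simp only [pathDist, eq_comm (a := i), hP, Sym2.eq_swap]

theorem pathDist_eq_inl_zero_iff {i j : ℕ} : pathDist k i j = .inl 0 ↔ i = j := by
  unfold pathDist; split_ifs <;> simp_all

theorem pathDist_eq_inl_one_iff {i j : ℕ} : pathDist k i j = .inl 1 ↔ IsPartner k i j := by
  unfold pathDist; split_ifs <;> simp_all [IsPartner]; omega

theorem pathDist_injective (w : ℕ) : Injective (pathDist k w) := by
  intro i j hij
  unfold pathDist at hij
  split_ifs at hij <;> simp_all [IsPartner]; omega

theorem farDist_injective : Injective farDist := by
  intro i j hij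
  unfold farDist at hij
  split_ifs at hij <;> simp_all; omega

theorem farDist_ne_inl {n : ℕ} (hn : n ≠ 1) (i : ℕ) : farDist i ≠ .inl n := by
  unfold farDist; split_ifs <;> simp [Ne.symm hn]

theorem farDist_eq_pathDist_iff (hk : 2 ≤ k) {w i : ℕ} :
    farDist w = pathDist k w i ↔ w = i + 1 ∨ w = 0 ∧ i = 2 * k + 1 := by
  unfold farDist pathDist
  split_ifs <;> simp_all [IsPartner] <;> omega

/-- `inl true` is the hub `h` and `inl false` is the point `q`. -/
def table (k : ℕ) : Bool ⊕ Fin (2 * k + 2) → Bool ⊕ Fin (2 * k + 2) → ℕ ⊕ Sym2 ℕ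
  | .inl a, .inl b => if a = b then .inl 0 else .inl 2
  | .inl true, .inr _ | .inr _, .inl true => .inl 1
  | .inl false, .inr i | .inr i, .inl false => farDist i
  | .inr i, .inr j => pathDist k i j

theorem existsUnique_hub_far : ∃! x, table k x (.inl true) = table k x (.inl false) := by
  refine ⟨.inr ⟨0, by omega⟩, rfl, ?_⟩
  rintro ((_ | _) | w) hw <;> simp [table] at hw
  exact congrArg _ (Fin.ext (farDist_injective hw.symm))

theorem existsUnique_hub_path (i : Fin (2 * k + 2)) :
    ∃! x, table k x (.inl true) = table k x (.inr i) := by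
  obtain ⟨j, hj, hji⟩ := exists_isPartner i.isLt
  refine ⟨.inr ⟨j, hj⟩, (pathDist_eq_inl_one_iff.mpr hji).symm, ?_⟩
  rintro ((_ | _) | w) hw <;> simp [table] at hw
  · exact absurd hw.symm (farDist_ne_inl (by omega) i)
  · have := pathDist_eq_inl_one_iff.mp hw.symm
    unfold IsPartner at this hji
    exact congrArg _ (Fin.ext (show (w : ℕ) = j by omega))

theorem existsUnique_far_path (hk : 2 ≤ k) (i : Fin (2 * k + 2)) :
    ∃! x, table k x (.inl false) = table k x (.inr i) := by
  obtain ⟨w, hw⟩ : ∃ w : Fin (2 * k + 2), (w : ℕ) = i + 1 ∨ (w : ℕ) = 0 ∧ (i : ℕ) = 2 * k + 1 := by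
    by_cases hi : (i : ℕ) = 2 * k + 1
    · exact ⟨⟨0, by omega⟩, .inr ⟨rfl, hi⟩⟩
    · exact ⟨⟨i + 1, by omega⟩, .inl rfl⟩
  refine ⟨.inr w, (farDist_eq_pathDist_iff hk).mpr hw, ?_⟩
  rintro ((_ | _) | w') hw' <;> simp [table] at hw'
  · exact absurd hw'.symm (farDist_ne_inl (by omega) i)
  · have := (farDist_eq_pathDist_iff hk).mp hw'
    exact congrArg _ (Fin.ext (by omega))

theorem existsUnique_path_path {i j : Fin (2 * k + 2)} (hij : i ≠ j) :
    ∃! x, table k x (.inr i) = table k x (.inr j) := by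
  refine ⟨.inl true, rfl, ?_⟩
  rintro ((_ | _) | w) hw <;> simp only [table] at hw
  · exact absurd (Fin.ext (farDist_injective hw)) hij
  · rfl
  · exact absurd (Fin.ext (pathDist_injective _ hw)) hij

theorem isUMPDistance_table (hk : 2 ≤ k) : IsUMPDistance (table k) (.inl 0) where
  eq_iff x y := by
    rcases x with (_ | _) | i <;> rcases y with (_ | _) | j <;>
      simp [table, pathDist_eq_inl_zero_iff, farDist_ne_inl, Fin.ext_iff]
  symm x y := by
    rcases x with (_ | _) | i <;> rcases y with (_ | _) | j <;> simp [table, pathDist_comm]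
  existsUnique_midpoint y z hyz := by
    have flip {y z : Bool ⊕ Fin (2 * k + 2)} (h : ∃! x, table k x y = table k x z) :
        ∃! x, table k x z = table k x y := (existsUnique_congr fun _ => eq_comm).mp h
    rcases y with (_ | _) | i <;> rcases z with (_ | _) | j
    all_goals first
      | exact absurd rfl hyz
      | exact existsUnique_hub_far | exact flip existsUnique_hub_far
      | exact existsUnique_hub_path _ | exact flip (existsUnique_hub_path _)
      | exact existsUnique_far_path hk _ | exact flip (existsUnique_far_path hk _)
      | exact existsUnique_path_path fun h => hyz (congrArg _ h)

end Hub

theorem exists_metricSpace_of_card {D : Type u} [t : TopologicalSpace D] [DiscreteTopology D]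
    (h2 : #D ≠ 2) (h4 : #D ≠ 4) (hc : #D ≤ 𝔠) :
    ∃ m : MetricSpace D, m.toUniformSpace.toTopologicalSpace = t ∧ IsUMPDistance m.dist 0 := by
  have countable_le {α : Type} [Countable α] : #α ≤ 𝔠 := mk_le_aleph0.trans aleph0_le_continuum
  rcases finite_or_infinite D with hD | hD
  · have hn2 : Nat.card D ≠ 2 := fun h => h2 (by rw [← Nat.cast_card, h]; rfl)
    have hn4 : Nat.card D ≠ 4 := fun h => h4 (by rw [← Nat.cast_card, h]; rfl)
    rcases Nat.even_or_odd (Nat.card D) with ⟨k, hk⟩ | hodd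
    · obtain hk0 | rfl | hk4 : k = 0 ∨ k = 3 ∨ 4 ≤ k := by omega
      · have : IsEmpty D := Finite.card_eq_zero_iff.mp (by omega)
        exact isUMPDistance_of_subsingleton.exists_metricSpace countable_le (Equiv.refl D)
      · obtain ⟨e⟩ := Finite.card_eq.mp (hk.trans (Nat.card_fin 6).symm)
        exact isUMPDistance_table6.exists_metricSpace countable_le e
      · obtain ⟨e⟩ := (Finite.card_eq (α := D) (β := Bool ⊕ Fin (2 * (k - 2) + 2))).mp
          (by simp; omega)
        exact (Hub.isUMPDistance_table (by omega : 2 ≤ k - 2)).exists_metricSpace countable_le e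
    · have : NeZero (Nat.card D) := ⟨hodd.pos.ne'⟩
      obtain ⟨e⟩ := Finite.card_eq.mp (Nat.card_zmod (Nat.card D)).symm
      have hG := bijective_add_self_of_isUnit_two (M := ZMod (Nat.card D)) (ZMod.isUnit_two hodd)
      exact (isUMPDistance_sub hG).exists_metricSpace countable_le e
  · have hcard : #D = #(D →₀ ZMod 3) := by
      rw [mk_finsupp_lift_of_infinite, lift_uzero, max_eq_left]
      simpa using (natCast_lt_aleph0.le.trans (aleph0_le_mk D) : ((3 : ℕ) : Cardinal) ≤ #D)
    obtain ⟨e⟩ := Cardinal.eq.mp hcard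
    have hG := bijective_add_self_of_isUnit_two (M := D →₀ ZMod 3)
      (ZMod.isUnit_two (n := 3) ⟨1, rfl⟩)
    refine (isUMPDistance_sub hG).exists_metricSpace ?_ e
    calc #(Sym2 (D →₀ ZMod 3)) ≤ #((D →₀ ZMod 3) × (D →₀ ZMod 3)) := mk_quot_le
      _ = #D * #D := by rw [← mul_def, ← hcard]
      _ ≤ 𝔠 * 𝔠 := mul_le_mul' hc hc
      _ = 𝔠 := continuum_mul_self

/-- Ohta–Ono / Ito–Ohta–Ono: a discrete space `D` admits a compatible metric with the
unique midset property iff `|D| ≠ 2`, `|D| ≠ 4` and `|D| ≤ 𝔠`. -/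
theorem discrete_ump_iff_card (D : Type*) [t : TopologicalSpace D] [DiscreteTopology D] :
    (∃ m : MetricSpace D, m.toUniformSpace.toTopologicalSpace = t ∧
        ∀ y z : D, y ≠ z → ∃! x, m.dist x y = m.dist x z) ↔
    (Cardinal.mk D ≠ 2 ∧ Cardinal.mk D ≠ 4 ∧ Cardinal.mk D ≤ Cardinal.continuum) := by
  constructor
  · rintro ⟨m, -, hump⟩
    have h : IsUMPDistance m.dist 0 := ⟨fun _ _ => dist_eq_zero, dist_comm, hump⟩
    exact ⟨h.card_ne_two, h.card_ne_four, h.card_le_continuum⟩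
  · rintro ⟨h2, h4, hc⟩
    obtain ⟨m, hm, h⟩ := exists_metricSpace_of_card h2 h4 hc
    exact ⟨m, hm, h.existsUnique_midpoint⟩
end

section
/- For every natural number n, a discrete space with n points admits a metric with the unique midset property if and only if there exists a colouring of the complete graph K_n with the unique midset property, i.e., a set C and a symmetric map φ assigning to each pair of distinct vertices x, y of an n-element vertex set a colour φ(x,y) ∈ C, such that for every pair of distinct vertices x and y there is exactly one vertex p with p ≠ x, p ≠ y and φ(x,p) = φ(y,p). -/
noncomputable section UMPAux
open Classical

variable {n : ℕ} {C : Type}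

/-- The set of encodings of all pairs with the same colour as `(x, y)`. -/
private def umpT (φ : Fin n → Fin n → C) (x y : Fin n) : Finset ℕ :=
  (Finset.univ.filter (fun p : Fin n × Fin n => φ p.1 p.2 = φ x y)).image
    (fun p => ((finProdFinEquiv p : Fin (n * n)) : ℕ))

private lemma umpT_nonempty (φ : Fin n → Fin n → C) (x y : Fin n) :
    (umpT φ x y).Nonempty := by
  refine ⟨(finProdFinEquiv ((x, y) : Fin n × Fin n) : Fin (n * n)), ?_⟩
  simp [umpT]
  exact ⟨x, y, rfl, rfl⟩

/-- Canonical natural-number code of the colour class of `(x, y)`. -/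
private def umpPsi (φ : Fin n → Fin n → C) (x y : Fin n) : ℕ :=
  (umpT φ x y).min' (umpT_nonempty φ x y)

private lemma umpPsi_mem (φ : Fin n → Fin n → C) (x y : Fin n) :
    ∃ p : Fin n × Fin n, φ p.1 p.2 = φ x y ∧
      ((finProdFinEquiv p : Fin (n * n)) : ℕ) = umpPsi φ x y := by
  have h := (umpT φ x y).min'_mem (umpT_nonempty φ x y)
  simp only [umpT, Finset.mem_image, Finset.mem_filter, Finset.mem_univ, true_and] at h
  obtain ⟨p, hp, hpe⟩ := h
  exact ⟨p, hp, hpe⟩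

private lemma umpPsi_lt (φ : Fin n → Fin n → C) (x y : Fin n) :
    umpPsi φ x y < n * n := by
  obtain ⟨p, -, hpe⟩ := umpPsi_mem φ x y
  rw [← hpe]
  exact (finProdFinEquiv p).isLt

private lemma umpPsi_eq_iff (φ : Fin n → Fin n → C) (x y x' y' : Fin n) :
    umpPsi φ x y = umpPsi φ x' y' ↔ φ x y = φ x' y' := by
  constructor
  · intro h
    obtain ⟨p, hp, hpe⟩ := umpPsi_mem φ x y
    obtain ⟨q, hq, hqe⟩ := umpPsi_mem φ x' y'
    have : p = q := by
      apply finProdFinEquiv.injective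
      apply Fin.val_injective
      rw [hpe, hqe, h]
    rw [← hp, this, hq]
  · intro h
    have hT : umpT φ x y = umpT φ x' y' := by
      simp [umpT, h]
    simp only [umpPsi]
    congr 1

/-- The candidate distance function. -/
private def umpD (φ : Fin n → Fin n → C) (x y : Fin n) : ℝ :=
  if x = y then 0 else 1 + (umpPsi φ x y : ℝ) / ((n * n : ℕ) : ℝ)

private lemma umpD_nonneg (φ : Fin n → Fin n → C) (x y : Fin n) : 0 ≤ umpD φ x y := by
  unfold umpD
  split
  · exact le_refl 0
  · positivity

private lemma umpD_one_le (φ : Fin n → Fin n → C) {x y : Fin n} (h : x ≠ y) :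
    1 ≤ umpD φ x y := by
  unfold umpD
  rw [if_neg h]
  have : (0:ℝ) ≤ (umpPsi φ x y : ℝ) / ((n * n : ℕ) : ℝ) := by positivity
  linarith

private lemma umpD_le_two (φ : Fin n → Fin n → C) (x y : Fin n) :
    umpD φ x y ≤ 2 := by
  unfold umpD
  split
  · norm_num
  · have hn : (0:ℝ) < ((n * n : ℕ) : ℝ) := by
      have : 0 < n := x.pos
      positivity
    have h1 : ((umpPsi φ x y : ℕ) : ℝ) ≤ ((n * n : ℕ) : ℝ) := by
      exact_mod_cast (umpPsi_lt φ x y).le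
    have : (umpPsi φ x y : ℝ) / ((n * n : ℕ) : ℝ) ≤ 1 := by
      rw [div_le_one hn]; exact h1
    linarith

private lemma umpD_self (φ : Fin n → Fin n → C) (x : Fin n) : umpD φ x x = 0 := by
  simp [umpD]

private lemma umpD_comm (φ : Fin n → Fin n → C) (hs : ∀ x y, φ x y = φ y x)
    (x y : Fin n) : umpD φ x y = umpD φ y x := by
  unfold umpD
  by_cases h : x = y
  · simp [h]
  · rw [if_neg h, if_neg (Ne.symm h)]
    have : umpPsi φ x y = umpPsi φ y x := (umpPsi_eq_iff φ x y y x).2 (hs x y)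
    rw [this]

private lemma umpD_triangle (φ : Fin n → Fin n → C) (x y z : Fin n) :
    umpD φ x z ≤ umpD φ x y + umpD φ y z := by
  by_cases hxy : x = y
  · subst hxy; rw [umpD_self]; linarith [le_refl (umpD φ x z)]
  by_cases hyz : y = z
  · subst hyz; rw [umpD_self]; linarith [le_refl (umpD φ x y)]
  by_cases hxz : x = z
  · subst hxz
    rw [umpD_self]
    have := umpD_nonneg φ x y; have := umpD_nonneg φ y x
    linarith
  · have h1 := umpD_le_two φ x z
    have h2 := umpD_one_le φ hxy
    have h3 := umpD_one_le φ hyz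
    linarith

private lemma umpD_eq_zero (φ : Fin n → Fin n → C) {x y : Fin n}
    (h : umpD φ x y = 0) : x = y := by
  by_contra hne
  have := umpD_one_le φ hne
  rw [h] at this
  linarith

private lemma umpD_eq_iff (φ : Fin n → Fin n → C) {x y z : Fin n}
    (hxy : x ≠ y) (hxz : x ≠ z) :
    umpD φ x y = umpD φ x z ↔ φ x y = φ x z := by
  unfold umpD
  rw [if_neg hxy, if_neg hxz]
  rw [← umpPsi_eq_iff φ x y x z]
  constructor
  · intro h
    have hn : (0:ℝ) < ((n * n : ℕ) : ℝ) := by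
      have : 0 < n := x.pos
      positivity
    have h' : (umpPsi φ x y : ℝ) / ((n * n : ℕ) : ℝ)
        = (umpPsi φ x z : ℝ) / ((n * n : ℕ) : ℝ) := by linarith
    rw [div_eq_div_iff hn.ne' hn.ne'] at h'
    have : (umpPsi φ x y : ℝ) = (umpPsi φ x z : ℝ) := mul_right_cancel₀ hn.ne' h'
    exact_mod_cast this
  · intro h; rw [h]

end UMPAux

/-- Ito–Ohta–Ono: a finite discrete space with `n` points admits a metric with the
unique midset property iff the complete graph `K_n` has a colouring with the unique
midset property: a symmetric assignment of colours to pairs of distinct vertices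
such that for any two distinct vertices `x, y` there is exactly one vertex `p`,
distinct from both, with `φ(x,p) = φ(y,p)`. -/
theorem finite_discrete_ump_iff_colouring (n : ℕ) :
    (∃ m : MetricSpace (Fin n),
        ∀ y z : Fin n, y ≠ z → ∃! x, m.dist x y = m.dist x z) ↔
    (∃ (C : Type) (φ : Fin n → Fin n → C),
        (∀ x y, φ x y = φ y x) ∧
        ∀ x y : Fin n, x ≠ y →
          ∃! p : Fin n, p ≠ x ∧ p ≠ y ∧ φ x p = φ y p) := by
  constructor
  · rintro ⟨m, hm⟩
    refine ⟨ℝ, fun x y => m.dist x y, fun x y => m.dist_comm x y, ?_⟩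
    intro x y hxy
    obtain ⟨p, hp, hpu⟩ := hm x y hxy
    have hdpos : m.dist x y ≠ 0 := fun h => hxy (m.eq_of_dist_eq_zero h)
    have hpx : p ≠ x := by
      intro h
      rw [h, m.dist_self] at hp
      exact hdpos hp.symm
    have hpy : p ≠ y := by
      intro h
      rw [h, m.dist_self] at hp
      have : m.dist y x = 0 := hp
      rw [m.dist_comm] at this
      exact hdpos this
    refine ⟨p, ⟨hpx, hpy, ?_⟩, ?_⟩
    · show m.dist x p = m.dist y p
      rw [m.dist_comm x p, m.dist_comm y p]; exact hp
    · rintro q ⟨hqx, hqy, hq⟩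
      have hq' : m.dist x q = m.dist y q := hq
      rw [m.dist_comm x q, m.dist_comm y q] at hq'
      exact hpu q hq'
  · rintro ⟨C, φ, hs, hφ⟩
    classical
    letI P : PseudoMetricSpace (Fin n) :=
      { dist := umpD φ
        dist_self := umpD_self φ
        dist_comm := umpD_comm φ hs
        dist_triangle := umpD_triangle φ }
    letI M : MetricSpace (Fin n) :=
      { P with eq_of_dist_eq_zero := fun h => umpD_eq_zero φ h }
    refine ⟨M, ?_⟩
    intro y z hyz
    have hdist : ∀ a b : Fin n, M.dist a b = umpD φ a b := fun a b => rfl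
    obtain ⟨p, ⟨hpy, hpz, hp⟩, hpu⟩ := hφ y z hyz
    refine ⟨p, ?_, ?_⟩
    · show M.dist p y = M.dist p z
      rw [hdist, hdist]
      exact (umpD_eq_iff φ hpy hpz).2 (by rw [hs p y, hs p z]; exact hp)
    · intro q hq
      have hq2 : M.dist q y = M.dist q z := hq
      rw [hdist, hdist] at hq2
      have hqy : q ≠ y := by
        intro h
        rw [h, umpD_self] at hq2
        have := umpD_one_le φ (Ne.symm hyz)
        rw [umpD_comm φ hs z y] at this
        rw [← hq2] at this; linarith
      have hqz : q ≠ z := by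
        intro h
        rw [h, umpD_self] at hq2
        have h1 := umpD_one_le φ hyz
        rw [umpD_comm φ hs y z] at h1
        rw [hq2] at h1; linarith
      have hcol : φ q y = φ q z := (umpD_eq_iff φ hqy hqz).1 hq2
      exact hpu q ⟨hqy, hqz, by rw [hs y q, hs z q, ← hcol]⟩
end

section
/- For each natural number n ≥ 0, ump(K_{2n+1}) = n; that is, for the complete graph on 2n+1 vertices there exists a colouring with the unique midset property using exactly n colours, and there is no colouring of K_{2n+1} with the unique midset property using fewer than n colours. -/
/-! Colour the edge `xy` of `K_m`, with vertices `ZMod m`, by the circular distance of `x` and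
`y`. Then `x` and `y` see `p` in the same colour iff `x + y = 2 * p`, which has exactly one
solution when `m` is odd, and the colours used are `1, …, m / 2`.

Conversely, sending each ordered pair of distinct vertices to its midpoint shows that some vertex
`x` is the midpoint of at most `m - 1` pairs: at most `m - 1` ordered pairs of other vertices see
`x` in the same colour. If the `m - 1` edges at `x` use `k` colours, Cauchy–Schwarz over the colour
classes gives `(m - 1) ^ 2 ≤ k * ((m - 1) + (m - 1))`, hence `m ≤ 2 * k + 1`. -/

open Finset

section Midsets

variable {V C : Type*}

def IsMidpoint (φ : V → V → C) (x y p : V) : Prop :=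
  p ≠ x ∧ p ≠ y ∧ φ x p = φ y p

def HasUniqueMidsets (φ : V → V → C) : Prop :=
  ∀ x y, x ≠ y → ∃! p, IsMidpoint φ x y p

def edgeColours (φ : V → V → C) : Set C :=
  {c | ∃ x y, x ≠ y ∧ φ x y = c}

end Midsets

namespace Finset

variable {α β : Type*} [DecidableEq β]

theorem sq_card_le_card_image_mul_card_filter_eq (s : Finset α) (g : α → β) :
    #s ^ 2 ≤ #(s.image g) * #{q ∈ s ×ˢ s | g q.1 = g q.2} := by
  have h_pairs : #{q ∈ s ×ˢ s | g q.1 = g q.2} =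
      ∑ c ∈ s.image g, #{y ∈ s | g y = c} ^ 2 := by
    rw [card_eq_sum_card_fiberwise (f := fun q => g q.1) fun q hq =>
      mem_image_of_mem g (mem_product.1 (mem_filter.1 hq).1).1]
    refine sum_congr rfl fun c _ => ?_
    rw [sq, ← card_product, filter_filter]
    congr 1
    ext ⟨y, z⟩
    simp only [mem_filter, mem_product]
    constructor
    · rintro ⟨⟨hy, hz⟩, hyz, rfl⟩
      exact ⟨⟨hy, rfl⟩, hz, hyz.symm⟩
    · rintro ⟨⟨hy, rfl⟩, hz, hzy⟩
      exact ⟨⟨hy, hz⟩, hzy.symm, rfl⟩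
  rw [h_pairs, card_eq_sum_card_image g s]
  exact sq_sum_le_card_mul_sum_sq

theorem card_filter_product_eq [DecidableEq α] (s : Finset α) (g : α → β) :
    #{q ∈ s ×ˢ s | g q.1 = g q.2} = #{q ∈ s.offDiag | g q.1 = g q.2} + #s := by
  rw [← diag_union_offDiag, filter_union, card_union_of_disjoint
    (disjoint_filter_filter (disjoint_diag_offDiag s)), add_comm,
    filter_true_of_mem (s := s.diag) fun q hq => by rw [(mem_diag.1 hq).2], diag_card]

end Finset

theorem HasUniqueMidsets.exists_card_filter_offDiag_le {V C : Type*} [Fintype V] [Nonempty V]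
    [DecidableEq V] [DecidableEq C] {φ : V → V → C} (hφ : HasUniqueMidsets φ) :
    ∃ x, #{q ∈ (univ.erase x).offDiag | φ q.1 x = φ q.2 x} ≤ Fintype.card V - 1 := by
  have hφ' : ∀ x y, x ≠ y → ∃ p, IsMidpoint φ x y p ∧ ∀ q, IsMidpoint φ x y q → q = p := hφ
  choose! mid hmid hmid_unique using hφ'
  obtain ⟨x, -, hx⟩ := exists_card_fiber_le_of_card_le_mul (s := univ.offDiag) (t := univ)
    (f := fun q => mid q.1 q.2) (n := Fintype.card V - 1) univ_nonempty
    (by rw [offDiag_card, card_univ, Nat.mul_sub_one])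
  refine ⟨x, le_of_eq_of_le (congrArg card ?_) hx⟩
  ext ⟨y, z⟩
  simp only [mem_filter, mem_offDiag, mem_erase, mem_univ, and_true, true_and]
  constructor
  · rintro ⟨⟨hy, hz, hyz⟩, hφyz⟩
    exact ⟨hyz, (hmid_unique y z hyz x ⟨hy.symm, hz.symm, hφyz⟩).symm⟩
  · rintro ⟨hyz, rfl⟩
    obtain ⟨hy, hz, hφyz⟩ := hmid y z hyz
    exact ⟨⟨hy.symm, hz.symm, hyz⟩, hφyz⟩

theorem HasUniqueMidsets.card_le_two_mul_ncard_edgeColours_add_one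
    {V C : Type*} [Fintype V] {φ : V → V → C} (hφ : HasUniqueMidsets φ) :
    Fintype.card V ≤ 2 * (edgeColours φ).ncard + 1 := by
  classical
  cases isEmpty_or_nonempty V
  · simp
  obtain ⟨x, hx⟩ := hφ.exists_card_filter_offDiag_le
  set s := univ.erase x
  have hs : #s = Fintype.card V - 1 := by rw [card_erase_of_mem (mem_univ x), card_univ]
  have h_cs := sq_card_le_card_image_mul_card_filter_eq s (φ · x)
  rw [card_filter_product_eq s (φ · x)] at h_cs
  have h_img : #(s.image (φ · x)) ≤ (edgeColours φ).ncard := by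
    rw [← Set.ncard_coe_finset]
    refine Set.ncard_le_ncard ?_ ((Set.finite_range (Function.uncurry φ)).subset ?_)
    · intro c hc
      obtain ⟨y, hy, rfl⟩ := mem_image.1 hc
      exact ⟨y, x, (mem_erase.1 hy).1, rfl⟩
    · rintro c ⟨y, z, -, rfl⟩
      exact ⟨(y, z), rfl⟩
  have h_s : #s ≤ 2 * #(s.image (φ · x)) := by
    rcases Nat.eq_zero_or_pos #s with h0 | hpos
    · omega
    refine Nat.le_of_mul_le_mul_left ?_ hpos
    calc #s * #s = #s ^ 2 := (sq _).symm
      _ ≤ #(s.image (φ · x)) * (#s + #s) := h_cs.trans (Nat.mul_le_mul_left _ (by omega))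
      _ = #s * (2 * #(s.image (φ · x))) := by ring
  have h_pos := Fintype.card_pos (α := V)
  omega

section CircularColouring

variable {m : ℕ}

def circularColouring (m : ℕ) (x y : ZMod m) : ℕ :=
  (x - y).valMinAbs.natAbs

theorem circularColouring_comm (x y : ZMod m) :
    circularColouring m x y = circularColouring m y x := by
  rw [circularColouring, ← ZMod.natAbs_valMinAbs_neg, neg_sub, circularColouring]

theorem isMidpoint_circularColouring_iff {x y p : ZMod m} (hxy : x ≠ y) :
    IsMidpoint (circularColouring m) x y p ↔ x + y = 2 * p := by
  simp only [IsMidpoint, circularColouring, ZMod.natAbs_valMinAbs_eq_natAbs_valMinAbs,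
    sub_left_inj, hxy, false_or]
  constructor
  · rintro ⟨-, -, h⟩
    linear_combination h
  · intro h
    refine ⟨?_, ?_, by linear_combination h⟩ <;> rintro rfl <;> apply hxy
    · linear_combination -h
    · linear_combination h

theorem hasUniqueMidsets_circularColouring (hm : Odd m) :
    HasUniqueMidsets (circularColouring m) := by
  intro x y hxy
  simp_rw [isMidpoint_circularColouring_iff hxy, eq_comm (a := x + y)]
  have h2 : IsUnit (2 : ZMod m) := by
    exact_mod_cast (ZMod.isUnit_iff_coprime 2 m).2 (Nat.coprime_two_left.2 hm)
  exact (IsUnit.isUnit_iff_mulLeft_bijective.mp h2).existsUnique (x + y)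

theorem edgeColours_circularColouring [NeZero m] :
    edgeColours (circularColouring m) = Set.Icc 1 (m / 2) := by
  ext c
  constructor
  · rintro ⟨x, y, hxy, rfl⟩
    exact ⟨Int.natAbs_pos.2 ((ZMod.valMinAbs_eq_zero _).not.2 (sub_ne_zero.2 hxy)),
      ZMod.natAbs_valMinAbs_le _⟩
  · rintro ⟨hc₁, hc₂⟩
    have hc : (c : ZMod m).valMinAbs = c := ZMod.valMinAbs_natCast_of_le_half hc₂
    refine ⟨c, 0, fun h => ?_, by simp [circularColouring, hc]⟩
    rw [h, ZMod.valMinAbs_zero] at hc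
    omega

theorem ncard_edgeColours_circularColouring [NeZero m] :
    (edgeColours (circularColouring m)).ncard = m / 2 := by
  rw [edgeColours_circularColouring, ← coe_Icc, Set.ncard_coe_finset, Nat.card_Icc,
    Nat.add_sub_cancel]

end CircularColouring

/-- Ito–Ohta–Ono: `ump(K_{2n+1}) = n`. There is a colouring of the complete graph on
`2n+1` vertices with the unique midset property using exactly `n` colours, and every
colouring of `K_{2n+1}` with the unique midset property uses at least `n` colours. -/
theorem ump_of_odd_complete_graph (n : ℕ) :
    (∃ (C : Type) (φ : Fin (2 * n + 1) → Fin (2 * n + 1) → C),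
        (∀ x y, φ x y = φ y x) ∧
        (∀ x y, x ≠ y → ∃! p, p ≠ x ∧ p ≠ y ∧ φ x p = φ y p) ∧
        {c : C | ∃ x y, x ≠ y ∧ φ x y = c}.ncard = n) ∧
    (∀ (C : Type*) (φ : Fin (2 * n + 1) → Fin (2 * n + 1) → C),
        (∀ x y, φ x y = φ y x) →
        (∀ x y, x ≠ y → ∃! p, p ≠ x ∧ p ≠ y ∧ φ x p = φ y p) →
        n ≤ {c : C | ∃ x y, x ≠ y ∧ φ x y = c}.ncard) := by
  refine ⟨?_, fun C φ _ hφ => ?_⟩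
  · -- `ZMod (2 * n + 1)` is definitionally `Fin (2 * n + 1)`.
    refine ⟨ℕ, circularColouring (2 * n + 1), circularColouring_comm (m := 2 * n + 1),
      hasUniqueMidsets_circularColouring (odd_two_mul_add_one n), ?_⟩
    exact (ncard_edgeColours_circularColouring (m := 2 * n + 1)).trans (by omega)
  · show n ≤ (edgeColours φ).ncard
    have h := HasUniqueMidsets.card_le_two_mul_ncard_edgeColours_add_one (φ := φ) hφ
    rw [Fintype.card_fin] at h
    omega
end

section
/- Let τ be an infinite cardinal and let (X, ρ) be an ultrametric space having a dense subset of cardinality at most τ. Then there is an isometric embedding of X into the generalized Hilbert space H^τ, i.e., the space ℓ²(I) of square-summable real-valued families indexed by a set I of cardinality τ, with its ℓ²-norm. -/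
/-!
An ultrametric space has negative type: if `∑ c x = 0` then `∑ c x * c y * d(x, y)² ≤ 0`.
This follows by induction on finite sets, splitting a set into an open ball about one of its points
and the complement, which lie at constant distance from each other. Hence the Gram kernel
`(d(x, p)² + d(y, p)² - d(x, y)²) / 2` is positive semidefinite, and `x ↦ δₓ` is an isometry
into the completion of the finitely supported functions under the corresponding pre-inner
product. If `D` is dense, every vector of a Hilbert basis of the closed span of the image of
`D` is non-orthogonal to the image of some point of `D`, while by Bessel's inequality each such
point is non-orthogonal to only countably many basis vectors; so the basis has at most
`|D| · ℵ₀ ≤ |I|` elements and the closed span embeds in `ℓ²(I)`.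
-/

universe u v

open scoped InnerProductSpace

namespace IsUltrametricDist

open Finset

variable {X : Type*} [PseudoMetricSpace X] [IsUltrametricDist X]

theorem sum_sum_mul_dist_sq_le (s : Finset X) (c : X → ℝ) {R : ℝ}
    (hR : ∀ x ∈ s, ∀ y ∈ s, dist x y ≤ R) :
    ∑ x ∈ s, ∑ y ∈ s, c x * c y * dist x y ^ 2 ≤ R ^ 2 * (∑ x ∈ s, c x) ^ 2 := by
  induction s using Finset.strongInduction generalizing R with
  | H s ih =>
  rcases s.eq_empty_or_nonempty with rfl | ⟨x₀, hx₀⟩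
  · simp
  obtain ⟨z₀, hz₀, hmax⟩ := s.exists_max_image (dist x₀) ⟨x₀, hx₀⟩
  set r := dist x₀ z₀
  have hle : ∀ y ∈ s, ∀ z ∈ s, dist y z ≤ r := fun y hy z hz =>
    (dist_triangle_max y x₀ z).trans (max_le (dist_comm y x₀ ▸ hmax y hy) (hmax z hz))
  rcases (dist_nonneg : 0 ≤ r).eq_or_lt with hr | hr
  · have hzero : ∀ y ∈ s, ∀ z ∈ s, dist y z = 0 := fun y hy z hz =>
      le_antisymm (hr ▸ hle y hy z hz) dist_nonneg
    rw [sum_eq_zero fun y hy => sum_eq_zero fun z hz => by simp [hzero y hy z hz]]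
    positivity
  -- Split `s` into the open ball of radius `r` about `x₀` and its complement, which lie at
  -- distance exactly `r` from each other.
  set t := s.filter (dist x₀ · < r)
  set u := s.filter (¬ dist x₀ · < r)
  have hcross : ∀ y ∈ t, ∀ z ∈ u, dist y z = r := by
    intro y hy z hz
    simp only [t, u, mem_filter, not_lt] at hy hz
    have hxz : dist x₀ z = r := le_antisymm (hmax z hz.1) hz.2
    rw [dist_eq_max_of_dist_ne_dist y x₀ z (by rw [dist_comm, hxz]; exact hy.2.ne),
      hxz, max_eq_right (dist_comm y x₀ ▸ hy.2.le)]
  have ht : t ⊂ s := filter_ssubset.2 ⟨z₀, hz₀, lt_irrefl r⟩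
  have hu : u ⊂ s := filter_ssubset.2 ⟨x₀, hx₀, by simpa using hr⟩
  have hQt := ih t ht fun y hy z hz => hle y (filter_subset _ s hy) z (filter_subset _ s hz)
  have hQu := ih u hu fun y hy z hz => hle y (filter_subset _ s hy) z (filter_subset _ s hz)
  have hsplit : ∀ f : X → ℝ, ∑ x ∈ s, f x = ∑ x ∈ t, f x + ∑ x ∈ u, f x := fun f =>
    (sum_filter_add_sum_filter_not s _ f).symm
  have htu : ∑ y ∈ t, ∑ z ∈ u, c y * c z * dist y z ^ 2
      = r ^ 2 * ((∑ y ∈ t, c y) * ∑ z ∈ u, c z) := by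
    rw [sum_mul_sum, mul_sum]
    refine sum_congr rfl fun y hy => ?_
    rw [mul_sum]
    exact sum_congr rfl fun z hz => by rw [hcross y hy z hz]; ring
  have hut : ∑ z ∈ u, ∑ y ∈ t, c z * c y * dist z y ^ 2
      = r ^ 2 * ((∑ y ∈ t, c y) * ∑ z ∈ u, c z) := by
    rw [sum_comm, ← htu]
    exact sum_congr rfl fun y _ => sum_congr rfl fun z _ => by rw [dist_comm]; ring
  have hrR : r ^ 2 ≤ R ^ 2 := pow_le_pow_left₀ hr.le (hR x₀ hx₀ z₀ hz₀) 2
  calc ∑ x ∈ s, ∑ y ∈ s, c x * c y * dist x y ^ 2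
      = (∑ y ∈ t, ∑ z ∈ t, c y * c z * dist y z ^ 2)
        + (∑ z ∈ u, ∑ y ∈ u, c z * c y * dist z y ^ 2)
        + 2 * (r ^ 2 * ((∑ y ∈ t, c y) * ∑ z ∈ u, c z)) := by
        simp only [hsplit, sum_add_distrib]
        rw [htu, hut]
        ring
    _ ≤ r ^ 2 * (∑ x ∈ t, c x + ∑ x ∈ u, c x) ^ 2 := by nlinarith
    _ ≤ R ^ 2 * (∑ x ∈ s, c x) ^ 2 := by rw [hsplit c]; gcongr

theorem sum_sum_mul_dist_sq_nonpos (s : Finset X) {c : X → ℝ} (hc : ∑ x ∈ s, c x = 0) :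
    ∑ x ∈ s, ∑ y ∈ s, c x * c y * dist x y ^ 2 ≤ 0 := by
  obtain ⟨R, hR⟩ := Metric.isBounded_iff.1 s.finite_toSet.isBounded
  simpa [hc] using sum_sum_mul_dist_sq_le s c hR

end IsUltrametricDist

section GramForm

variable {X : Type*} [PseudoMetricSpace X]

noncomputable def distSqForm : (X →₀ ℝ) →ₗ[ℝ] (X →₀ ℝ) →ₗ[ℝ] ℝ :=
  Finsupp.lift _ ℝ X fun x => Finsupp.linearCombination ℝ fun y => dist x y ^ 2

theorem distSqForm_apply (u v : X →₀ ℝ) :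
    distSqForm u v = ∑ x ∈ u.support, ∑ y ∈ v.support, u x * v y * dist x y ^ 2 := by
  simp [distSqForm, Finsupp.lift_apply, Finsupp.linearCombination_apply, Finsupp.sum,
    Finset.mul_sum, mul_assoc]

@[simp]
theorem distSqForm_single_single (x y : X) (a b : ℝ) :
    distSqForm (Finsupp.single x a) (Finsupp.single y b) = a * b * dist x y ^ 2 := by
  simp [distSqForm, mul_assoc]

theorem distSqForm_comm (u v : X →₀ ℝ) : distSqForm u v = distSqForm v u := by
  suffices (distSqForm : (X →₀ ℝ) →ₗ[ℝ] _).flip = distSqForm from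
    LinearMap.congr_fun₂ this v u
  ext x y
  simp [dist_comm]

noncomputable abbrev totalMass : (X →₀ ℝ) →ₗ[ℝ] ℝ := Finsupp.linearCombination ℝ fun _ => 1

theorem IsUltrametricDist.distSqForm_self_nonpos [IsUltrametricDist X] {u : X →₀ ℝ}
    (hu : totalMass u = 0) : distSqForm u u ≤ 0 := by
  rw [distSqForm_apply]
  refine IsUltrametricDist.sum_sum_mul_dist_sq_nonpos _ ?_
  simpa [Finsupp.linearCombination_apply, Finsupp.sum] using hu

/-- The bilinear extension of the Gram kernel `(d(x,p)² + d(y,p)² - d(x,y)²) / 2`. -/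
noncomputable def gramForm (p : X) (u v : X →₀ ℝ) : ℝ :=
  (totalMass u * distSqForm v (Finsupp.single p 1)
    + distSqForm u (Finsupp.single p 1) * totalMass v - distSqForm u v) / 2

theorem gramForm_comm (p : X) (u v : X →₀ ℝ) : gramForm p u v = gramForm p v u := by
  simp only [gramForm, distSqForm_comm u v]; ring

theorem gramForm_sub_single_self (p x y : X) :
    gramForm p (Finsupp.single x 1 - Finsupp.single y 1)
      (Finsupp.single x 1 - Finsupp.single y 1) = dist x y ^ 2 := by
  simp [gramForm, dist_comm y x]

theorem IsUltrametricDist.gramForm_self_nonneg [IsUltrametricDist X] (p : X) (u : X →₀ ℝ) :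
    0 ≤ gramForm p u u := by
  -- Shift the mass of `u` onto `p` and apply negative type.
  have h := distSqForm_self_nonpos (u := u - totalMass u • Finsupp.single p 1) (by simp)
  simp only [map_sub, map_smul, LinearMap.sub_apply, LinearMap.smul_apply, smul_eq_mul,
    distSqForm_comm (Finsupp.single p 1) u, distSqForm_single_single, dist_self] at h
  rw [gramForm]
  nlinarith

noncomputable abbrev IsUltrametricDist.gramCore [IsUltrametricDist X] (p : X) :
    PreInnerProductSpace.Core ℝ (X →₀ ℝ) where
  inner := gramForm p
  conj_inner_symm u v := gramForm_comm p v u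
  re_inner_nonneg u := gramForm_self_nonneg p u
  add_left u v w := by simp only [gramForm, map_add, LinearMap.add_apply]; ring
  smul_left u v r := by
    simp only [gramForm, map_smul, LinearMap.smul_apply, smul_eq_mul, conj_trivial]; ring

end GramForm

theorem IsUltrametricDist.exists_isometry_hilbertSpace (X : Type u) [PseudoMetricSpace X]
    [IsUltrametricDist X] :
    ∃ (H : Type u) (_ : NormedAddCommGroup H) (_ : InnerProductSpace ℝ H) (_ : CompleteSpace H)
      (φ : X → H), Isometry φ := by
  rcases isEmpty_or_nonempty X with hX | ⟨⟨p⟩⟩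
  · exact ⟨lp (fun _ : X => ℝ) 2, inferInstance, inferInstance, inferInstance, isEmptyElim,
      isometry_subsingleton⟩
  let : PreInnerProductSpace.Core ℝ (X →₀ ℝ) := gramCore p
  let : SeminormedAddCommGroup (X →₀ ℝ) :=
    InnerProductSpace.Core.toSeminormedAddCommGroup (𝕜 := ℝ)
  let : InnerProductSpace ℝ (X →₀ ℝ) := InnerProductSpace.ofCore _
  refine ⟨UniformSpace.Completion (X →₀ ℝ), inferInstance, inferInstance, inferInstance,
    fun x => (Finsupp.single x 1 : X →₀ ℝ), Isometry.of_dist_eq fun x y => ?_⟩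
  rw [UniformSpace.Completion.dist_eq, dist_eq_norm, norm_eq_sqrt_re_inner (𝕜 := ℝ)]
  exact (congrArg Real.sqrt (gramForm_sub_single_self p x y)).trans (Real.sqrt_sq dist_nonneg)

open Cardinal

theorem Orthonormal.mk_le_mk_mul_aleph0 {𝕜 : Type*} [RCLike 𝕜] {ι E : Type u}
    [NormedAddCommGroup E] [InnerProductSpace 𝕜 E] {v : ι → E} (hv : Orthonormal 𝕜 v)
    {S : Set E} (hvS : ∀ i, v i ∈ (Submodule.span 𝕜 S).topologicalClosure) :
    #ι ≤ #S * ℵ₀ := by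
  have hS : ∀ i, ∃ s ∈ S, ⟪v i, s⟫_𝕜 ≠ 0 := by
    by_contra! h
    obtain ⟨i, hi⟩ := h
    have hperp : v i ∈ (Submodule.span 𝕜 S)ᗮ :=
      (Submodule.mem_orthogonal' _ _).2 fun s hs => by
        induction hs using Submodule.span_induction with
        | mem s hs => exact hi s hs
        | zero => simp
        | add a b _ _ ha hb => simp [inner_add_right, ha, hb]
        | smul r a _ ha => simp [inner_smul_right, ha]
    have hclos : v i ∈ (Submodule.span 𝕜 S)ᗮᗮ :=
      Submodule.topologicalClosure_minimal _ (Submodule.le_orthogonal_orthogonal _)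
        (Submodule.isClosed_orthogonal _) (hvS i)
    exact hv.ne_zero i (by simpa using (Submodule.inf_orthogonal_eq_bot _).le ⟨hperp, hclos⟩)
  choose g hgS hg using hS
  refine mk_le_mk_mul_of_mk_preimage_le (fun i => (⟨g i, hgS i⟩ : S)) fun s => ?_
  -- By Bessel's inequality only countably many `v i` are not orthogonal to `s`.
  refine (Set.Countable.mono ?_ (hv.inner_products_summable (s : E)).countable_support).le_aleph0
  rintro i rfl
  simpa using hg i

noncomputable def HilbertBasis.toLp {𝕜 ι E I : Type*} [RCLike 𝕜] [NormedAddCommGroup E]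
    [InnerProductSpace 𝕜 E]
    (b : HilbertBasis ι 𝕜 E) (e : ι ↪ I) : E →ₗᵢ[𝕜] lp (fun _ : I => 𝕜) 2 :=
  (((HilbertBasis.ofRepr (LinearIsometryEquiv.refl 𝕜 _)).orthonormal.comp e
    e.injective).orthogonalFamily.linearIsometry).comp b.repr.toLinearIsometry

theorem Isometry.exists_isometry_lp {X H : Type u} [PseudoMetricSpace X] [NormedAddCommGroup H]
    [InnerProductSpace ℝ H] [CompleteSpace H] {φ : X → H} (hφ : Isometry φ) {D : Set X}
    (hD : Dense D) {I : Type v} [Infinite I] (hDI : lift.{v} #D ≤ lift.{u} #I) :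
    ∃ f : X → lp (fun _ : I => ℝ) 2, Isometry f := by
  set K := (Submodule.span ℝ (φ '' D)).topologicalClosure
  have hφK : ∀ x, φ x ∈ K := fun x => by
    rw [← SetLike.mem_coe, Submodule.topologicalClosure_coe]
    refine closure_mono Submodule.subset_span
      (image_closure_subset_closure_image hφ.continuous ⟨x, hD.closure_eq ▸ trivial, rfl⟩)
  obtain ⟨w, b, -⟩ := exists_hilbertBasis ℝ K
  have hw : #w ≤ #D * ℵ₀ :=
    ((b.orthonormal.comp_linearIsometry K.subtypeₗᵢ).mk_le_mk_mul_aleph0 fun i => (b i).2).trans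
      (mul_le_mul_left mk_image_le _)
  obtain ⟨e⟩ : Nonempty (w ↪ I) := by
    refine lift_mk_le'.1 ((lift_le.2 hw).trans ?_)
    have hI : ℵ₀ ≤ lift.{u} #I := aleph0_le_lift.2 (aleph0_le_mk I)
    rw [lift_mul, lift_aleph0]
    exact mul_le_of_le hI hDI hI
  exact ⟨fun x => b.toLp e ⟨φ x, hφK x⟩, (b.toLp e).isometry.comp
    (Isometry.of_dist_eq fun x y => hφ.dist_eq x y)⟩

/-- Lemin: every ultrametric space of weight (density) at most `τ = |I|`, for `I`
infinite, embeds isometrically into the generalized Hilbert space `H^τ = ℓ²(I)`. -/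
theorem ultrametric_isometric_embedding_into_generalized_hilbert
    (X : Type u) [MetricSpace X]
    (hultra : ∀ x y z : X, dist x z ≤ max (dist x y) (dist y z))
    (I : Type v) [Infinite I]
    (hdense : ∃ D : Set X, Dense D ∧
      Cardinal.lift.{v} (Cardinal.mk D) ≤ Cardinal.lift.{u} (Cardinal.mk I)) :
    ∃ f : X → lp (fun _ : I => ℝ) 2, Isometry f := by
  have : IsUltrametricDist X := ⟨hultra⟩
  obtain ⟨H, _, _, _, φ, hφ⟩ := IsUltrametricDist.exists_isometry_hilbertSpace X
  obtain ⟨D, hD, hDI⟩ := hdense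
  exact hφ.exists_isometry_lp hD hDI
end

section
/- For every natural number n ≥ 1: (1) every ultrametric space consisting of exactly n+1 points admits an isometric embedding into the n-dimensional Euclidean space ℝⁿ; and (2) there exists an ultrametric space consisting of n+1 points that admits no isometric embedding into ℝᵏ for any k < n. -/
/-!
A finite ultrametric space is of negative type: `∑ᵢ ∑ⱼ d(xᵢ, xⱼ)² wᵢ wⱼ ≤ 0` whenever
`∑ᵢ wᵢ = 0`. Indeed, cutting the space at its diameter `d` around one point splits it into two
smaller pieces at mutual distance exactly `d`, and the cross terms `2 d² S₁ S₂` recombine with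
the bounds `d² S₁²` and `d² S₂²` for the pieces into `d² (S₁ + S₂)²`. By Schoenberg's argument,
negative type makes `(d(x₀, xᵢ)² + d(x₀, xⱼ)² - d(xᵢ, xⱼ)²) / 2`, indexed by the `n` points
other than a base point `x₀`, positive semidefinite, hence the Gram matrix of `n` vectors in
`ℝⁿ`; these vectors, with `0` for `x₀`, embed the space isometrically.

Conversely, the discrete metric is ultrametric, and if `n + 1` points of `ℝᵏ` are pairwise at
distance `1`, their differences with one of them have the positive definite Gram matrix
`(I + J) / 2`, so `n ≤ k`.
-/
open Finset Matrix

theorem Finset.sum_sum_mul_mul_eq_of_cross_eq {ι R : Type*} [CommSemiring R] (s : Finset ι)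
    (P : ι → Prop) [DecidablePred P] (K : ι → ι → R) (v : ι → R) {c : R}
    (hK : ∀ i ∈ s, ∀ j ∈ s, ¬(P i ↔ P j) → K i j = c) :
    ∑ i ∈ s, ∑ j ∈ s, K i j * v i * v j =
      ∑ i ∈ s with P i, ∑ j ∈ s with P j, K i j * v i * v j +
      ∑ i ∈ s with ¬P i, ∑ j ∈ s with ¬P j, K i j * v i * v j +
      2 * c * (∑ i ∈ s with P i, v i) * (∑ i ∈ s with ¬P i, v i) := by
  have hcross : ∀ t t' : Finset ι, t ⊆ s → t' ⊆ s → (∀ i ∈ t, ∀ j ∈ t', ¬(P i ↔ P j)) →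
      ∑ i ∈ t, ∑ j ∈ t', K i j * v i * v j = c * (∑ i ∈ t, v i) * (∑ j ∈ t', v j) := by
    intro t t' ht ht' htt'
    rw [mul_assoc, sum_mul_sum, mul_sum]
    refine sum_congr rfl fun i hi => ?_
    rw [mul_sum]
    refine sum_congr rfl fun j hj => ?_
    rw [hK i (ht hi) j (ht' hj) (htt' i hi j hj)]
    ring
  simp only [← sum_filter_add_sum_filter_not s P, sum_add_distrib]
  rw [hcross (s.filter P) (s.filter (¬P ·)) (filter_subset _ _) (filter_subset _ _)
      (by simp +contextual [mem_filter]),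
    hcross (s.filter (¬P ·)) (s.filter P) (filter_subset _ _) (filter_subset _ _)
      (by simp +contextual [mem_filter])]
  ring

namespace IsUltrametricDist

variable {ι X : Type*} [PseudoMetricSpace X] [IsUltrametricDist X]

theorem dist_eq_of_dist_lt_of_dist_eq {a x y : X} {r : ℝ} (hx : dist a x < r)
    (hy : dist a y = r) : dist x y = r := by
  rw [dist_comm] at hx
  rw [dist_eq_max_of_dist_ne_dist _ _ _ (hy ▸ hx.ne), hy, max_eq_right hx.le]

theorem sum_sum_dist_sq_mul_mul_le (p : ι → X) (s : Finset ι) {D : ℝ}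
    (hD : ∀ i ∈ s, ∀ j ∈ s, dist (p i) (p j) ≤ D) (v : ι → ℝ) :
    ∑ i ∈ s, ∑ j ∈ s, dist (p i) (p j) ^ 2 * v i * v j ≤ D ^ 2 * (∑ i ∈ s, v i) ^ 2 := by
  classical
  induction s using Finset.strongInduction generalizing D with
  | H s ih =>
  rcases s.eq_empty_or_nonempty with rfl | hs
  · simp
  obtain ⟨⟨a, b⟩, hab, hmax⟩ :=
    (s ×ˢ s).exists_max_image (fun q => dist (p q.1) (p q.2)) (hs.product hs)
  rw [mem_product] at hab
  set d := dist (p a) (p b)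
  have hd : ∀ i ∈ s, ∀ j ∈ s, dist (p i) (p j) ≤ d :=
    fun i hi j hj => hmax (i, j) (mem_product.2 ⟨hi, hj⟩)
  rcases (dist_nonneg : 0 ≤ d).eq_or_lt with hd0 | hd0
  · have hzero : ∀ i ∈ s, ∀ j ∈ s, dist (p i) (p j) = 0 :=
      fun i hi j hj => le_antisymm (hd0 ▸ hd i hi j hj) dist_nonneg
    rw [sum_eq_zero fun i hi => sum_eq_zero fun j hj => by simp [hzero i hi j hj]]
    positivity
  set P : ι → Prop := fun i => dist (p a) (p i) < d
  have hsphere : ∀ i, P i → ∀ j ∈ s, ¬P j → dist (p i) (p j) = d := fun i hPi j hj hPj =>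
    dist_eq_of_dist_lt_of_dist_eq hPi (le_antisymm (hd a hab.1 j hj) (not_lt.1 hPj))
  have hcross : ∀ i ∈ s, ∀ j ∈ s, ¬(P i ↔ P j) → dist (p i) (p j) ^ 2 = d ^ 2 := by
    intro i hi j hj hij
    by_cases hPi : P i
    · rw [hsphere i hPi j hj (by tauto)]
    · rw [dist_comm, hsphere j (by tauto) i hi hPi]
  have hin : s.filter P ⊂ s := filter_ssubset.2 ⟨b, hab.2, lt_irrefl d⟩
  have hout : s.filter (¬P ·) ⊂ s := filter_ssubset.2 ⟨a, hab.1, by simpa [P] using hd0⟩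
  have hle : d ≤ D := hD a hab.1 b hab.2
  calc ∑ i ∈ s, ∑ j ∈ s, dist (p i) (p j) ^ 2 * v i * v j
      = _ := sum_sum_mul_mul_eq_of_cross_eq s P _ v hcross
    _ ≤ d ^ 2 * (∑ i ∈ s with P i, v i) ^ 2 + d ^ 2 * (∑ i ∈ s with ¬P i, v i) ^ 2 +
        2 * d ^ 2 * (∑ i ∈ s with P i, v i) * (∑ i ∈ s with ¬P i, v i) := by
      gcongr
      · exact ih _ hin fun i hi j hj => hd i (filter_subset _ _ hi) j (filter_subset _ _ hj)
      · exact ih _ hout fun i hi j hj => hd i (filter_subset _ _ hi) j (filter_subset _ _ hj)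
    _ = d ^ 2 * (∑ i ∈ s, v i) ^ 2 := by rw [← sum_filter_add_sum_filter_not s P]; ring
    _ ≤ D ^ 2 * (∑ i ∈ s, v i) ^ 2 := by gcongr

theorem sum_sum_dist_sq_mul_mul_nonpos [Fintype ι] (p : ι → X) (w : ι → ℝ)
    (hw : ∑ i, w i = 0) : ∑ i, ∑ j, dist (p i) (p j) ^ 2 * w i * w j ≤ 0 := by
  have hbdd := (Set.finite_range p).isBounded
  simpa [hw] using sum_sum_dist_sq_mul_mul_le p univ (fun i _ j _ =>
    Metric.dist_le_diam_of_mem hbdd (Set.mem_range_self i) (Set.mem_range_self j)) w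

end IsUltrametricDist

section Schoenberg

variable {ι : Type*} [Fintype ι]

/-- If `δ i j = ‖F i - F j‖²` with `F i₀ = 0`, this is the Gram matrix `⟪F i, F j⟫` by
polarization. -/
noncomputable def gramOfSqDist (δ : ι → ι → ℝ) (i₀ : ι) : Matrix ι ι ℝ :=
  of fun i j => (δ i₀ i + δ i₀ j - δ i j) / 2

theorem dotProduct_gramOfSqDist_mulVec [DecidableEq ι] {δ : ι → ι → ℝ}
    (hsymm : ∀ i j, δ i j = δ j i) {i₀ : ι} (h₀ : δ i₀ i₀ = 0) (v : ι → ℝ) :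
    v ⬝ᵥ gramOfSqDist δ i₀ *ᵥ v =
      -(∑ i, ∑ j, δ i j * (v - Pi.single i₀ (∑ k, v k) : ι → ℝ) i *
        (v - Pi.single i₀ (∑ k, v k) : ι → ℝ) j) / 2 := by
  simp only [dotProduct, mulVec, gramOfSqDist, of_apply, Pi.sub_apply, Pi.single_apply, sub_mul,
    mul_sub, sum_sub_distrib, mul_ite, mul_zero, ite_mul, zero_mul, sum_ite_eq', mem_univ, if_true,
    h₀, sum_ite_irrel, sum_const_zero, add_div, sub_div, add_mul, mul_add, sum_add_distrib,
    mul_sum, sum_mul]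
  rw [sum_comm (f := fun x i => v x * (δ i₀ i / 2 * v i))]
  simp only [hsymm _ i₀, sub_zero, ← sum_sub_distrib, ← sum_add_distrib, ← sum_neg_distrib]
  simp only [sum_div]
  exact sum_congr rfl fun _ _ => sum_congr rfl fun _ _ => by ring

theorem posSemidef_gramOfSqDist {δ : ι → ι → ℝ} (hsymm : ∀ i j, δ i j = δ j i)
    {i₀ : ι} (h₀ : δ i₀ i₀ = 0)
    (hneg : ∀ w : ι → ℝ, ∑ i, w i = 0 → ∑ i, ∑ j, δ i j * w i * w j ≤ 0) :
    (gramOfSqDist δ i₀).PosSemidef := by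
  classical
  refine .of_dotProduct_mulVec_nonneg ?_ fun v => ?_
  · ext i j
    simp only [conjTranspose_apply, star_trivial, gramOfSqDist, of_apply, hsymm j i, add_comm]
  · rw [star_trivial, dotProduct_gramOfSqDist_mulVec hsymm h₀]
    have := hneg (v - Pi.single i₀ (∑ k, v k)) (by simp [sum_sub_distrib])
    linarith

end Schoenberg

open scoped ComplexOrder in
theorem Matrix.PosSemidef.exists_eq_gram {n 𝕜 : Type*} [Fintype n] [RCLike 𝕜]
    {A : Matrix n n 𝕜} (hA : A.PosSemidef) :
    ∃ v : n → EuclideanSpace 𝕜 n, gram 𝕜 v = A := by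
  classical
  open scoped MatrixOrder in
  obtain ⟨M, rfl⟩ := CStarAlgebra.nonneg_iff_eq_star_mul_self.mp hA.nonneg
  refine ⟨fun j => WithLp.toLp 2 fun i => M i j, ?_⟩
  rw [gram_eq_conjTranspose_mul (EuclideanSpace.basisFun n 𝕜)]
  rfl

theorem exists_euclideanSpace_norm_sub_sq_eq {n : ℕ} {δ : Fin (n + 1) → Fin (n + 1) → ℝ}
    (hsymm : ∀ i j, δ i j = δ j i) (hdiag : ∀ i, δ i i = 0)
    (hneg : ∀ w : Fin (n + 1) → ℝ, ∑ i, w i = 0 → ∑ i, ∑ j, δ i j * w i * w j ≤ 0) :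
    ∃ F : Fin (n + 1) → EuclideanSpace ℝ (Fin n), ∀ i j, ‖F i - F j‖ ^ 2 = δ i j := by
  set G := gramOfSqDist δ 0
  obtain ⟨v, hv⟩ :=
    ((posSemidef_gramOfSqDist hsymm (hdiag 0) hneg).submatrix Fin.succ).exists_eq_gram
  set F : Fin (n + 1) → EuclideanSpace ℝ (Fin n) := Fin.cons 0 v
  have hv_inner : ∀ i j, inner ℝ (v i) (v j) = G i.succ j.succ := fun i j => congrFun₂ hv i j
  have hF : gram ℝ F = G := by
    ext i j
    induction i using Fin.cases <;> induction j using Fin.cases <;>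
      simp [F, G, gramOfSqDist, hdiag, hsymm _ 0, hv_inner]
  refine ⟨F, fun i j => ?_⟩
  rw [norm_sub_sq_real, ← real_inner_self_eq_norm_sq, ← real_inner_self_eq_norm_sq]
  simp only [← gram_apply, hF, G, gramOfSqDist, of_apply, hdiag]
  ring

theorem IsUltrametricDist.exists_norm_sub_eq_dist {X : Type*} [PseudoMetricSpace X]
    [IsUltrametricDist X] {n : ℕ} (hX : Nat.card X = n + 1) :
    ∃ f : X → EuclideanSpace ℝ (Fin n), ∀ x y, ‖f x - f y‖ = dist x y := by
  have : Finite X := Nat.finite_of_card_ne_zero (by omega)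
  set e := Finite.equivFinOfCardEq hX
  obtain ⟨F, hF⟩ := exists_euclideanSpace_norm_sub_sq_eq
    (δ := fun i j => dist (e.symm i) (e.symm j) ^ 2) (fun i j => by rw [dist_comm])
    (fun i => by simp) (sum_sum_dist_sq_mul_mul_nonpos e.symm)
  refine ⟨F ∘ e, fun x y => ?_⟩
  simpa [sq_eq_sq₀ (norm_nonneg _) dist_nonneg] using hF (e x) (e y)

theorem le_finrank_of_pairwise_norm_sub_eq_one {E : Type*} [NormedAddCommGroup E]
    [InnerProductSpace ℝ E] [FiniteDimensional ℝ E] {n : ℕ} (f : Fin (n + 1) → E)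
    (hf : ∀ i j, i ≠ j → ‖f i - f j‖ = 1) : n ≤ Module.finrank ℝ E := by
  set u : Fin n → E := fun i => f i.succ - f 0
  have hu : ∀ i, ‖u i‖ = 1 := fun i => hf _ _ (Fin.succ_ne_zero i)
  have hgram : gram ℝ u = (2⁻¹ : ℝ) • (1 + vecMulVec 1 1) := by
    ext i j
    have hij : u i - u j = f i.succ - f j.succ := sub_sub_sub_cancel_right _ _ _
    rw [gram_apply, real_inner_eq_norm_mul_self_add_norm_mul_self_sub_norm_sub_mul_self_div_two,
      hu, hu, hij]
    rcases eq_or_ne i j with rfl | hne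
    · norm_num
    · simp [hne, hf _ _ (Fin.succ_injective _ |>.ne hne)]
  have hpos : (gram ℝ u).PosDef := hgram ▸
    (PosDef.one.add_posSemidef (posSemidef_vecMulVec_self_star 1)).smul (by norm_num)
  simpa using (linearIndependent_of_posDef_gram hpos).fintype_card_le_finrank

def DiscreteMetric (α : Type*) := α

namespace DiscreteMetric

variable {α : Type*}

open Classical in
noncomputable instance : MetricSpace (DiscreteMetric α) where
  dist x y := if x = y then 0 else 1
  dist_self _ := if_pos rfl
  dist_comm x y := by simp only [eq_comm]
  dist_triangle x y z := by split_ifs <;> simp_all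
  eq_of_dist_eq_zero h := by simpa using h

theorem dist_eq_one {x y : DiscreteMetric α} (h : x ≠ y) : dist x y = 1 := if_neg h

open Classical in
instance : IsUltrametricDist (DiscreteMetric α) where
  dist_triangle_max x y z := by
    change ite _ _ _ ≤ max (ite _ _ _) (ite _ _ _)
    split_ifs <;> simp_all

end DiscreteMetric

theorem ultrametric_finite_isometric_embedding_general (n : ℕ) :
    (∀ (X : Type) [MetricSpace X],
        (∀ x y z : X, dist x z ≤ max (dist x y) (dist y z)) →
        Nat.card X = n + 1 →
        ∃ f : X → EuclideanSpace ℝ (Fin n), ∀ x y : X, ‖f x - f y‖ = dist x y) ∧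
    (∃ (X : Type) (_ : MetricSpace X),
        (∀ x y z : X, dist x z ≤ max (dist x y) (dist y z)) ∧
        Nat.card X = n + 1 ∧
        ∀ k : ℕ, k < n →
          ¬ ∃ f : X → EuclideanSpace ℝ (Fin k), ∀ x y : X, ‖f x - f y‖ = dist x y) := by
  refine ⟨fun X _ hX hcard => ?_, ?_⟩
  · have : IsUltrametricDist X := ⟨hX⟩
    exact IsUltrametricDist.exists_norm_sub_eq_dist hcard
  · refine ⟨DiscreteMetric (Fin (n + 1)), inferInstance, dist_triangle_max, Nat.card_fin _, ?_⟩
    rintro k hk ⟨f, hf⟩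
    have := le_finrank_of_pairwise_norm_sub_eq_one f fun i j hij =>
      (hf i j).trans (DiscreteMetric.dist_eq_one hij)
    rw [finrank_euclideanSpace_fin] at this
    omega

/-- Lemin–Lemin: for `n ≥ 1`, (1) every ultrametric space with exactly `n + 1` points
embeds isometrically into the `n`-dimensional Euclidean space `ℝⁿ`, and (2) there is
an ultrametric space with `n + 1` points admitting no isometric embedding into `ℝᵏ`
for any `k < n`. -/
theorem ultrametric_finite_isometric_embedding (n : ℕ) (hn : 1 ≤ n) :
    (∀ (X : Type) [MetricSpace X],
        (∀ x y z : X, dist x z ≤ max (dist x y) (dist y z)) →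
        Nat.card X = n + 1 →
        ∃ f : X → EuclideanSpace ℝ (Fin n), ∀ x y : X, ‖f x - f y‖ = dist x y) ∧
    (∃ (X : Type) (_ : MetricSpace X),
        (∀ x y z : X, dist x z ≤ max (dist x y) (dist y z)) ∧
        Nat.card X = n + 1 ∧
        ∀ k : ℕ, k < n →
          ¬ ∃ f : X → EuclideanSpace ℝ (Fin k), ∀ x y : X, ‖f x - f y‖ = dist x y) :=
  ultrametric_finite_isometric_embedding_general n
end
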